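/- arXiv:1309.2201 — 2 statements merged into one kernel-verified Lean document; each statement's English description precedes it below -/
import Mathlib

section
/- Let K_{n+1} be the complete graph on vertices {0,...,n} rooted at 0. For each a ≥ 0, the number of spanning trees of K_{n+1} with exactly a inversions equals the number of parking functions for K_{n+1} of degree binom(n,2) - a. -/
open Finset

namespace PFG

variable {n : ℕ}

/-- `deg_{Sᶜ}(i)`: the number of edges `{i,j}` of `G` with `j ∉ S`. -/
noncomputable def sDeg (G : SimpleGraph (Fin (n+1))) (S : Finset (Fin (n+1))) (i : Fin (n+1)) : ℕ :=
  Set.ncard {j : Fin (n+1) | G.Adj i j ∧ j ∉ S}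

/-- `P` is a parking function for `G` with respect to the root `r`:
for every nonempty `S ⊆ V \ {r}` there is `i ∈ S` with `P i < deg_{Sᶜ}(i)`. -/
def IsParkingFunction (G : SimpleGraph (Fin (n+1))) (r : Fin (n+1))
    (P : Fin (n+1) → ℕ) : Prop :=
  ∀ S : Finset (Fin (n+1)), S.Nonempty → r ∉ S → ∃ i ∈ S, P i < sDeg G S i

/-- The degree of a parking function: the sum of its values over non-root vertices. -/
def degPF (r : Fin (n+1)) (P : Fin (n+1) → ℕ) : ℕ := ∑ v ∈ univ.erase r, P v

/-- A spanning tree of `G` rooted at `r`, encoded by its parent function: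
each non-root vertex is adjacent (in `G`) to its parent, and iterating
the parent map from any vertex reaches the root. -/
structure RootedSpanningTree (G : SimpleGraph (Fin (n+1))) (r : Fin (n+1)) where
  parent : Fin (n+1) → Fin (n+1)
  parent_root : parent r = r
  adj_parent : ∀ v, v ≠ r → G.Adj (parent v) v
  reaches_root : ∀ v, ∃ k, parent^[k] v = r

/-- `i` is a (proper) ancestor of `j` in the rooted tree with parent map `par`. -/
def IsAncestor (par : Fin (n+1) → Fin (n+1)) (i j : Fin (n+1)) : Prop :=
  ∃ k, 0 < k ∧ par^[k] j = i

/-- An inversion: `i` is an ancestor of `j` and `i > j`. -/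
def IsInversion (par : Fin (n+1) → Fin (n+1)) (i j : Fin (n+1)) : Prop :=
  IsAncestor par i j ∧ j < i

/-- A κ-inversion: an inversion `(i,j)` such that moreover `i` is not the
root and the parent of `i` is adjacent to `j` in `G`. -/
def IsKappaInversion (G : SimpleGraph (Fin (n+1))) (r : Fin (n+1))
    (par : Fin (n+1) → Fin (n+1)) (i j : Fin (n+1)) : Prop :=
  IsAncestor par i j ∧ j < i ∧ i ≠ r ∧ G.Adj (par i) j

/-- the κ-number: the number of κ-inversions. -/
noncomputable def kappaNum (G : SimpleGraph (Fin (n+1))) (r : Fin (n+1))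
    (par : Fin (n+1) → Fin (n+1)) : ℕ :=
  Set.ncard {p : Fin (n+1) × Fin (n+1) | IsKappaInversion G r par p.1 p.2}

/-- the number of inversions. -/
noncomputable def invNum (par : Fin (n+1) → Fin (n+1)) : ℕ :=
  Set.ncard {p : Fin (n+1) × Fin (n+1) | IsInversion par p.1 p.2}

open Classical in
/-- The neighbors of `i` in `G`, listed in decreasing order. -/
noncomputable def nbrs (G : SimpleGraph (Fin (n+1))) (i : Fin (n+1)) : List (Fin (n+1)) :=
  ((univ.filter (fun j => G.Adj i j)).sort (· ≤ ·)).reverse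

/-- One step of depth-first search from vertex `i`: scan the neighbors of `i`
in decreasing order; each unvisited neighbor `j` is visited, gets parent `i`,
and the search recurses from `j`.  The state is the pair
(visited vertices, parent map). -/
noncomputable def dfsStep (G : SimpleGraph (Fin (n+1))) :
    ℕ → Fin (n+1) → Finset (Fin (n+1)) × (Fin (n+1) → Fin (n+1)) →
      Finset (Fin (n+1)) × (Fin (n+1) → Fin (n+1))
  | 0, _, st => st
  | (fuel+1), i, st =>
      (nbrs G i).foldl
        (fun st j =>
          if j ∈ st.1 then st
          else dfsStep G fuel j (insert j st.1, Function.update st.2 j i)) st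

/-- The parent map of the depth-first search tree of `G` rooted at `r`,
visiting neighbors in decreasing numerical order. -/
noncomputable def dfsParent (G : SimpleGraph (Fin (n+1))) (r : Fin (n+1)) :
    Fin (n+1) → Fin (n+1) :=
  (dfsStep G (n+1) r ({r}, fun _ => r)).2

/-- The set of edges of the rooted tree given by parent map `par`. -/
def treeEdges (r : Fin (n+1)) (par : Fin (n+1) → Fin (n+1)) : Set (Sym2 (Fin (n+1))) :=
  {e | ∃ v, v ≠ r ∧ e = s(par v, v)}

end PFG

/-!
Run a depth-first search of a rooted tree from `0` that always continues from the deepest vertex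
of the current path with an undiscovered child, and discovers the largest such child. A vertex `v`
discovered at time `t` has at most `t - 1` inversions, all with vertices discovered earlier, so
`P v := t - 1 - inv v` sums to `deg P = (0 + 1 + ⋯ + (n - 1)) - inv T = C(n,2) - inv T`. In any
set `S` of non-root vertices, the first one discovered has all earlier vertices outside `S`, so `P`
is a parking function.

Conversely, `P` can be read back step by step: at time `t` the search attaches a vertex `w` below
a vertex `u` of the current path with `P w + #{larger vertices above w} = t - 1`, the deepest
possible `u` and then the largest possible `w` winning. The parking condition keeps this greedy
reconstruction alive, and it rebuilds a tree whose search returns `P`. Two trees with the same `P`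
are compared at the first time their searches differ: counting the inversions of the vertex
discovered there in both trees leads to a contradiction.
-/

namespace PFG

section Ancestors

variable {α : Type*} {p : α → α} {r : α}

def ReachesRoot (p : α → α) (r v : α) : Prop := ∃ k, p^[k] v = r

theorem iterate_eq_root_of_le (h0 : p r = r) {v : α} {m k : ℕ} (hm : p^[m] v = r)
    (hk : m ≤ k) : p^[k] v = r := by
  obtain ⟨j, rfl⟩ := Nat.exists_eq_add_of_le hk
  rw [Nat.add_comm, Function.iterate_add_apply, hm, Function.iterate_fixed h0]

theorem eq_root_of_isPeriodicPt (h0 : p r = r) {v : α} (hv : ReachesRoot p r v) {k : ℕ}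
    (hk : 0 < k) (hc : Function.IsPeriodicPt p k v) : v = r := by
  obtain ⟨m, hm⟩ := hv
  rw [← (hc.mul_const m).eq]
  exact iterate_eq_root_of_le h0 hm (Nat.le_mul_of_pos_left m hk)

theorem eq_root_of_parent_eq_self (h0 : p r = r) {v : α} (hv : ReachesRoot p r v)
    (h : p v = v) : v = r :=
  eq_root_of_isPeriodicPt h0 hv one_pos (by simpa [Function.IsPeriodicPt, Function.IsFixedPt])

theorem exists_not_mem_parent_mem {V : Finset α} (hr : r ∈ V) {w : α} (hw : w ∉ V)
    (hreach : ReachesRoot p r w) : ∃ c ∉ V, p c ∈ V := by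
  obtain ⟨m, hm⟩ := hreach
  induction m generalizing w with
  | zero =>
    obtain rfl : w = r := hm
    exact absurd hr hw
  | succ m ih =>
    by_cases hpw : p w ∈ V
    · exact ⟨w, hw, hpw⟩
    · exact ih hpw (by rwa [← Function.iterate_succ_apply])

variable [Fintype α]

open Classical in
noncomputable def ancestors (p : α → α) (v : α) : Finset α :=
  univ.filter fun x => ∃ k, p^[k] v = x

theorem mem_ancestors {v x : α} : x ∈ ancestors p v ↔ ∃ k, p^[k] v = x := by
  simp [ancestors]

theorem self_mem_ancestors {v : α} : v ∈ ancestors p v :=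
  mem_ancestors.2 ⟨0, rfl⟩

theorem parent_mem_ancestors {v : α} : p v ∈ ancestors p v :=
  mem_ancestors.2 ⟨1, rfl⟩

theorem root_mem_ancestors {v : α} (hv : ReachesRoot p r v) : r ∈ ancestors p v :=
  mem_ancestors.2 hv

theorem ancestors_root (h0 : p r = r) : ancestors p r = {r} := by
  ext x
  simp [mem_ancestors, Function.iterate_fixed h0, eq_comm]

theorem ancestors_eq_insert_parent [DecidableEq α] {v : α} :
    ancestors p v = insert v (ancestors p (p v)) := by
  ext x
  simp only [mem_ancestors, Finset.mem_insert]
  constructor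
  · rintro ⟨_ | k, rfl⟩
    · exact Or.inl rfl
    · exact Or.inr ⟨k, (Function.iterate_succ_apply p k v).symm⟩
  · rintro (rfl | ⟨k, rfl⟩)
    · exact ⟨0, rfl⟩
    · exact ⟨k + 1, Function.iterate_succ_apply p k v⟩

theorem ancestors_subset_of_mem {u v : α} (h : u ∈ ancestors p v) :
    ancestors p u ⊆ ancestors p v := by
  obtain ⟨k, rfl⟩ := mem_ancestors.1 h
  intro x hx
  obtain ⟨m, rfl⟩ := mem_ancestors.1 hx
  exact mem_ancestors.2 ⟨m + k, Function.iterate_add_apply p m k v⟩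

theorem mem_ancestors_or_mem_ancestors {v x y : α} (hx : x ∈ ancestors p v)
    (hy : y ∈ ancestors p v) : x ∈ ancestors p y ∨ y ∈ ancestors p x := by
  obtain ⟨a, rfl⟩ := mem_ancestors.1 hx
  obtain ⟨b, rfl⟩ := mem_ancestors.1 hy
  rcases Nat.le_total a b with h | h
  · obtain ⟨c, rfl⟩ := Nat.exists_eq_add_of_le h
    exact Or.inr (mem_ancestors.2 ⟨c, by rw [Nat.add_comm, Function.iterate_add_apply]⟩)
  · obtain ⟨c, rfl⟩ := Nat.exists_eq_add_of_le h
    exact Or.inl (mem_ancestors.2 ⟨c, by rw [Nat.add_comm, Function.iterate_add_apply]⟩)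

theorem ReachesRoot.of_mem_ancestors (h0 : p r = r) {v x : α} (hv : ReachesRoot p r v)
    (hx : x ∈ ancestors p v) : ReachesRoot p r x := by
  obtain ⟨k, rfl⟩ := mem_ancestors.1 hx
  obtain ⟨m, hm⟩ := hv
  exact ⟨m, by
    rw [← Function.iterate_add_apply]
    exact iterate_eq_root_of_le h0 hm (Nat.le_add_right m k)⟩

theorem eq_of_mem_ancestors_of_mem_ancestors (h0 : p r = r) {x y : α} (hy : ReachesRoot p r y)
    (hxy : x ∈ ancestors p y) (hyx : y ∈ ancestors p x) : x = y := by
  obtain ⟨a, rfl⟩ := mem_ancestors.1 hxy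
  obtain ⟨b, hb⟩ := mem_ancestors.1 hyx
  rcases Nat.eq_zero_or_pos (b + a) with hab | hpos
  · obtain rfl : a = 0 := by omega
    rfl
  · have hcyc : Function.IsPeriodicPt p (b + a) y := by
      rw [Function.IsPeriodicPt, Function.IsFixedPt, Function.iterate_add_apply, hb]
    obtain rfl := eq_root_of_isPeriodicPt h0 hy hpos hcyc
    rw [Function.iterate_fixed h0]

theorem not_mem_ancestors_parent (h0 : p r = r) {v : α} (hv : ReachesRoot p r v)
    (hne : v ≠ r) : v ∉ ancestors p (p v) := fun h =>
  hne (eq_root_of_parent_eq_self h0 hv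
    (eq_of_mem_ancestors_of_mem_ancestors h0 hv parent_mem_ancestors h))

theorem iterate_update_of_not_mem_ancestors [DecidableEq α] {u v x : α}
    (hv : v ∉ ancestors p x) (k : ℕ) : (Function.update p v u)^[k] x = p^[k] x := by
  induction k with
  | zero => rfl
  | succ k ih =>
    rw [Function.iterate_succ_apply', Function.iterate_succ_apply', ih,
      Function.update_of_ne fun h => hv (mem_ancestors.2 ⟨k, h⟩)]

theorem ancestors_update_of_not_mem [DecidableEq α] {u v x : α} (hv : v ∉ ancestors p x) :
    ancestors (Function.update p v u) x = ancestors p x := by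
  ext y
  simp only [mem_ancestors, iterate_update_of_not_mem_ancestors hv]

noncomputable def depth (p : α → α) (v : α) : ℕ := (ancestors p v).card

theorem depth_lt_of_mem_ancestors (h0 : p r = r) {u x : α} (hx : ReachesRoot p r x)
    (hu : u ∈ ancestors p x) (hne : u ≠ x) : depth p u < depth p x :=
  Finset.card_lt_card ⟨ancestors_subset_of_mem hu, fun h =>
    hne (eq_of_mem_ancestors_of_mem_ancestors h0 hx hu (h self_mem_ancestors))⟩

theorem depth_lt_of_not_mem_ancestors (h0 : p r = r) {x u y : α} (hy : ReachesRoot p r y)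
    (hx : x ∈ ancestors p y) (hu : u ∈ ancestors p y) (hxu : x ∉ ancestors p u) :
    depth p u < depth p x := by
  rcases mem_ancestors_or_mem_ancestors hx hu with h | h
  · exact absurd h hxu
  · refine depth_lt_of_mem_ancestors h0 (hy.of_mem_ancestors h0 hx) h ?_
    rintro rfl
    exact hxu self_mem_ancestors

theorem exists_child_mem_ancestors (h0 : p r = r) {u u' : α} (hu : ReachesRoot p r u)
    (hu' : u' ∈ ancestors p u) (hne : u' ≠ u) :
    ∃ c, p c = u' ∧ c ∈ ancestors p u ∧ c ∉ ancestors p u' := by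
  classical
  obtain ⟨k, hk⟩ := mem_ancestors.1 hu'
  obtain _ | k := k
  · exact absurd hk.symm hne
  have hex : ∃ j, p^[j + 1] u ∈ ancestors p u' := ⟨k, hk ▸ self_mem_ancestors⟩
  set j := Nat.find hex
  have hjk : j ≤ k := Nat.find_min' hex (hk ▸ self_mem_ancestors)
  have hj : p^[j + 1] u = u' := by
    refine eq_of_mem_ancestors_of_mem_ancestors h0 (hu.of_mem_ancestors h0 hu')
      (Nat.find_spec hex) (mem_ancestors.2 ⟨k - j, ?_⟩)
    rw [← Function.iterate_add_apply, ← hk]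
    congr 1
    omega
  refine ⟨p^[j] u, by rw [← hj, Function.iterate_succ_apply'], mem_ancestors.2 ⟨j, rfl⟩, ?_⟩
  rcases Nat.eq_zero_or_pos j with hj0 | hj0
  · rw [hj0]
    exact fun h => hne (eq_of_mem_ancestors_of_mem_ancestors h0 hu hu' h)
  · have := Nat.find_min hex (m := j - 1) (by omega)
    rwa [Nat.sub_add_cancel hj0] at this

end Ancestors

section LargerAncestors

variable {α : Type*} [Fintype α] [LinearOrder α] {p : α → α} {r : α}

noncomputable def numLargerAncestors (p : α → α) (u w : α) : ℕ :=
  ((ancestors p u).filter (w < ·)).card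

noncomputable def inversionsAt (p : α → α) (v : α) : ℕ := numLargerAncestors p (p v) v

theorem numLargerAncestors_mono {u v : α} (h : u ∈ ancestors p v) (w : α) :
    numLargerAncestors p u w ≤ numLargerAncestors p v w :=
  Finset.card_le_card (Finset.filter_subset_filter _ (ancestors_subset_of_mem h))

theorem numLargerAncestors_lt {u u' c w : α} (hu' : u' ∈ ancestors p u) (hc : c ∈ ancestors p u)
    (hc' : c ∉ ancestors p u') (hwc : w < c) :
    numLargerAncestors p u' w < numLargerAncestors p u w :=
  Finset.card_lt_card ⟨Finset.filter_subset_filter _ (ancestors_subset_of_mem hu'),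
    fun hsub => hc' (Finset.mem_of_mem_filter _ (hsub (Finset.mem_filter.2 ⟨hc, hwc⟩)))⟩

theorem numLargerAncestors_root (h0 : p r = r) {w : α} (hw : r ≤ w) :
    numLargerAncestors p r w = 0 := by
  simp [numLargerAncestors, ancestors_root h0, hw]

theorem numLargerAncestors_eq_parent_add {u : α} (hu : u ∉ ancestors p (p u)) (w : α) :
    numLargerAncestors p u w = numLargerAncestors p (p u) w + if w < u then 1 else 0 := by
  rw [numLargerAncestors, numLargerAncestors, ancestors_eq_insert_parent, Finset.filter_insert]
  split_ifs
  · exact Finset.card_insert_of_notMem fun h => hu (Finset.mem_of_mem_filter _ h)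
  · rfl

theorem numLargerAncestors_eq_parent_of_not_lt {u w : α} (h : ¬ w < u) :
    numLargerAncestors p u w = numLargerAncestors p (p u) w := by
  rw [numLargerAncestors, numLargerAncestors, ancestors_eq_insert_parent, Finset.filter_insert,
    if_neg h]

theorem numLargerAncestors_le_parent_add_one (u w : α) :
    numLargerAncestors p u w ≤ numLargerAncestors p (p u) w + 1 := by
  rw [numLargerAncestors, numLargerAncestors, ancestors_eq_insert_parent, Finset.filter_insert]
  split_ifs
  · exact Finset.card_insert_le _ _
  · exact Nat.le_succ _

/-- A discrete intermediate value property: along the path from `u` to the root the count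
drops by at most one per step, down to `0` at the root. -/
theorem exists_mem_ancestors_numLargerAncestors_eq (h0 : p r = r) {u w : α}
    (hu : ReachesRoot p r u) (hw : r ≤ w) {k : ℕ} (hk : k ≤ numLargerAncestors p u w) :
    ∃ x ∈ ancestors p u, numLargerAncestors p x w = k := by
  obtain ⟨m, hm⟩ := hu
  induction m generalizing u with
  | zero =>
    obtain rfl : u = r := hm
    exact ⟨u, self_mem_ancestors, by rw [numLargerAncestors_root h0 hw] at hk ⊢; omega⟩
  | succ m ih =>
    rcases hk.eq_or_lt with rfl | hlt
    · exact ⟨u, self_mem_ancestors, rfl⟩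
    · have := numLargerAncestors_le_parent_add_one (p := p) u w
      obtain ⟨x, hx, hxk⟩ := ih (u := p u) (by omega) (by rwa [← Function.iterate_succ_apply])
      exact ⟨x, ancestors_subset_of_mem parent_mem_ancestors hx, hxk⟩

end LargerAncestors

section DFSPrefix

variable {n : ℕ} {p : Fin (n+1) → Fin (n+1)} {t : ℕ} {visit : ℕ → Fin (n+1)}

def discovered (visit : ℕ → Fin (n+1)) (t : ℕ) : Finset (Fin (n+1)) :=
  (Finset.range (t + 1)).image visit

theorem mem_discovered {x : Fin (n+1)} : x ∈ discovered visit t ↔ ∃ s ≤ t, visit s = x := by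
  simp [discovered]

theorem visit_mem_discovered {s : ℕ} (hs : s ≤ t) : visit s ∈ discovered visit t :=
  mem_discovered.2 ⟨s, hs, rfl⟩

theorem discovered_update_succ (v : Fin (n+1)) :
    discovered (Function.update visit (t + 1) v) (t + 1) = insert v (discovered visit t) := by
  ext x
  simp only [mem_discovered, Finset.mem_insert]
  constructor
  · rintro ⟨s, hs, rfl⟩
    rcases Nat.lt_or_ge s (t + 1) with h | h
    · exact Or.inr ⟨s, by omega, (Function.update_of_ne (by omega) _ _).symm⟩
    · obtain rfl : s = t + 1 := by omega
      exact Or.inl (Function.update_self _ _ _)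
  · rintro (rfl | ⟨s, hs, rfl⟩)
    · exact ⟨t + 1, le_rfl, Function.update_self _ _ _⟩
    · exact ⟨s, by omega, Function.update_of_ne (by omega) _ _⟩

/-- `visit s` is the vertex discovered at time `s` by a depth-first search from `0` that explores
children in decreasing order: the parent of each new vertex lies on the path from the previously
discovered vertex to the root, and of two siblings the later one is smaller. -/
structure IsDFSPrefix (p : Fin (n+1) → Fin (n+1)) (t : ℕ) (visit : ℕ → Fin (n+1)) : Prop where
  visit_zero : visit 0 = 0
  injOn : Set.InjOn visit (Set.Iic t)
  parent_mem_ancestors_prev :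
    ∀ s, 1 ≤ s → s ≤ t → p (visit s) ∈ ancestors p (visit (s - 1))
  lt_of_parent_eq :
    ∀ s s', 1 ≤ s → s < s' → s' ≤ t → p (visit s) = p (visit s') → visit s' < visit s

namespace IsDFSPrefix

variable (h : IsDFSPrefix p t visit)
include h

theorem visit_ne_zero {s : ℕ} (hs1 : 1 ≤ s) (hs : s ≤ t) : visit s ≠ 0 := fun h' =>
  absurd (h.injOn hs (Nat.zero_le t) (h'.trans h.visit_zero.symm)) (by omega)

theorem card_discovered : (discovered visit t).card = t + 1 := by
  rw [discovered, Finset.card_image_of_injOn, Finset.card_range]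
  exact fun a ha b hb => h.injOn (show a ≤ t by simp at ha; omega) (show b ≤ t by simp at hb; omega)

theorem exists_visit_eq_of_mem_ancestors (h0 : p 0 = 0) {s : ℕ} (hs : s ≤ t) {x : Fin (n+1)}
    (hx : x ∈ ancestors p (visit s)) : ∃ s' ≤ s, visit s' = x := by
  induction s generalizing x with
  | zero =>
    rw [h.visit_zero, ancestors_root h0, Finset.mem_singleton] at hx
    exact ⟨0, le_rfl, h.visit_zero.trans hx.symm⟩
  | succ s ih =>
    rw [ancestors_eq_insert_parent] at hx
    rcases Finset.mem_insert.1 hx with rfl | hx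
    · exact ⟨s + 1, le_rfl, rfl⟩
    · obtain ⟨s', hs', rfl⟩ := ih (by omega) (ancestors_subset_of_mem
        (h.parent_mem_ancestors_prev (s + 1) (by omega) hs) hx)
      exact ⟨s', by omega, rfl⟩

theorem lt_of_mem_ancestors (h0 : p 0 = 0) {s s' : ℕ} (hs : s ≤ t) (hs' : s' ≤ t)
    (hx : visit s' ∈ ancestors p (visit s)) (hne : s' ≠ s) : s' < s := by
  obtain ⟨s'', hs'', heq⟩ := h.exists_visit_eq_of_mem_ancestors h0 hs hx
  have := h.injOn (show s'' ≤ t by omega) hs' heq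
  omega

theorem exists_parent_eq_visit (h0 : p 0 = 0) {s : ℕ} (hs1 : 1 ≤ s) (hs : s ≤ t) :
    ∃ s' < s, p (visit s) = visit s' := by
  obtain ⟨s', hs', heq⟩ :=
    h.exists_visit_eq_of_mem_ancestors h0 (by omega) (h.parent_mem_ancestors_prev s hs1 hs)
  exact ⟨s', by omega, heq.symm⟩

theorem reachesRoot (h0 : p 0 = 0) {s : ℕ} (hs : s ≤ t) : ReachesRoot p 0 (visit s) := by
  induction s using Nat.strong_induction_on with
  | _ s ih =>
    rcases Nat.eq_zero_or_pos s with rfl | hs1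
    · exact ⟨0, h.visit_zero⟩
    · obtain ⟨s', hs', heq⟩ := h.exists_parent_eq_visit h0 hs1 hs
      obtain ⟨k, hk⟩ := ih s' hs' (by omega)
      exact ⟨k + 1, by rw [Function.iterate_succ_apply, heq, hk]⟩

/-- Once the search has backtracked to the parent of `visit s₀`, every vertex discovered
before `s₀` that is still on the current path lies above that parent. -/
theorem mem_ancestors_parent_of_lt {s₀ s : ℕ} (hs₀s : s₀ ≤ s) (hs : s ≤ t)
    {s' : ℕ} (hs' : s' < s₀) (hx : visit s' ∈ ancestors p (visit s)) :
    visit s' ∈ ancestors p (p (visit s₀)) := by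
  induction s, hs₀s using Nat.le_induction with
  | base =>
    rw [ancestors_eq_insert_parent] at hx
    rcases Finset.mem_insert.1 hx with heq | hx
    · exact absurd (h.injOn (show s' ≤ t by omega) hs heq) (by omega)
    · exact hx
  | succ s hs₀s ih =>
    rw [ancestors_eq_insert_parent] at hx
    rcases Finset.mem_insert.1 hx with heq | hx
    · exact absurd (h.injOn (show s' ≤ t by omega) hs heq) (by omega)
    · exact ih (by omega) (ancestors_subset_of_mem
        (h.parent_mem_ancestors_prev (s + 1) (by omega) hs) hx)

theorem not_mem_ancestors_of_not_mem_discovered (h0 : p 0 = 0)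
    {v : Fin (n+1)} (hv : v ∉ discovered visit t) {s : ℕ} (hs : s ≤ t) :
    v ∉ ancestors p (visit s) := fun hmem => by
  obtain ⟨s', hs', heq⟩ := h.exists_visit_eq_of_mem_ancestors h0 hs hmem
  exact hv (mem_discovered.2 ⟨s', by omega, heq⟩)

theorem inversionsAt_le (h0 : p 0 = 0) {s : ℕ} (hs1 : 1 ≤ s) (hs : s ≤ t) :
    inversionsAt p (visit s) ≤ s - 1 := by
  have hsub : (ancestors p (p (visit s))).filter (visit s < ·) ⊆
      (Finset.Icc 1 (s - 1)).image visit := by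
    intro x hx
    obtain ⟨hx, hlt⟩ := Finset.mem_filter.1 hx
    obtain ⟨s', hs', rfl⟩ := h.exists_visit_eq_of_mem_ancestors h0 (by omega)
      (ancestors_subset_of_mem (h.parent_mem_ancestors_prev s hs1 hs) hx)
    refine Finset.mem_image.2 ⟨s', Finset.mem_Icc.2 ⟨Nat.one_le_iff_ne_zero.2 ?_, hs'⟩, rfl⟩
    rintro rfl
    exact absurd (h.visit_zero ▸ hlt) (Fin.not_lt_zero _)
  calc inversionsAt p (visit s) ≤ ((Finset.Icc 1 (s - 1)).image visit).card :=
        Finset.card_le_card hsub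
    _ ≤ s - 1 := Finset.card_image_le.trans (by simp)

theorem extend (h0 : p 0 = 0) {u v : Fin (n+1)}
    (hv : v ∉ discovered visit t) (hu : u ∈ ancestors p (visit t))
    (hsib : ∀ s, 1 ≤ s → s ≤ t → p (visit s) = u → v < visit s) :
    IsDFSPrefix (Function.update p v u) (t + 1) (Function.update visit (t + 1) v) := by
  set p' := Function.update p v u
  set visit' := Function.update visit (t + 1) v
  have hvisit' : ∀ s ≤ t, visit' s = visit s := fun s hs => Function.update_of_ne (by omega) _ _
  have hnew : visit' (t + 1) = v := Function.update_self _ _ _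
  have hne : ∀ s ≤ t, visit s ≠ v := fun s hs heq => hv (mem_discovered.2 ⟨s, hs, heq⟩)
  have hp' : ∀ s ≤ t, p' (visit s) = p (visit s) := fun s hs => Function.update_of_ne (hne s hs) _ _
  have hpv : p' v = u := Function.update_self _ _ _
  have hanc : ∀ s ≤ t, ancestors p' (visit s) = ancestors p (visit s) := fun s hs =>
    ancestors_update_of_not_mem (h.not_mem_ancestors_of_not_mem_discovered h0 hv hs)
  refine ⟨(hvisit' 0 (Nat.zero_le t)).trans h.visit_zero, ?_, ?_, ?_⟩
  · rw [show Set.Iic (t + 1) = insert (t + 1) (Set.Iic t) by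
      rw [← Order.succ_eq_add_one, Order.Iic_succ], Set.injOn_insert (by simp)]
    refine ⟨h.injOn.congr fun s hs => (hvisit' s hs).symm, ?_⟩
    rintro ⟨s, hs, heq⟩
    rw [hnew, hvisit' s hs] at heq
    exact hne s hs heq
  · intro s hs1 hs
    rcases Nat.lt_or_ge s (t + 1) with h₁ | h₁
    · rw [hvisit' s (by omega), hvisit' (s - 1) (by omega), hp' s (by omega),
        hanc (s - 1) (by omega)]
      exact h.parent_mem_ancestors_prev s hs1 (by omega)
    · obtain rfl : s = t + 1 := by omega
      rw [hnew, Nat.add_sub_cancel, hvisit' t le_rfl, hanc t le_rfl, hpv]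
      exact hu
  · intro s s' hs1 hss' hs' heq
    rw [hvisit' s (by omega), hp' s (by omega)] at heq
    rw [hvisit' s (by omega)]
    rcases Nat.lt_or_ge s' (t + 1) with h₁ | h₁
    · rw [hvisit' s' (by omega), hp' s' (by omega)] at heq
      rw [hvisit' s' (by omega)]
      exact h.lt_of_parent_eq s s' hs1 hss' (by omega) heq
    · obtain rfl : s' = t + 1 := by omega
      rw [hnew, hpv] at heq
      rw [hnew]
      exact hsib s hs1 (by omega) heq

end IsDFSPrefix

noncomputable def timeOf (visit : ℕ → Fin (n+1)) (v : Fin (n+1)) : ℕ :=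
  Function.invFunOn visit (Set.Iic n) v

namespace IsDFSPrefix

variable (h : IsDFSPrefix p n visit)
include h

theorem exists_visit_eq (v : Fin (n+1)) : ∃ s ≤ n, visit s = v := by
  have hinj : Function.Injective fun i : Fin (n+1) => visit i :=
    fun i j hij => Fin.ext (h.injOn (Nat.lt_succ_iff.1 i.isLt) (Nat.lt_succ_iff.1 j.isLt) hij)
  obtain ⟨i, rfl⟩ := Finite.surjective_of_injective hinj v
  exact ⟨i, Nat.lt_succ_iff.1 i.isLt, rfl⟩

theorem visit_timeOf (v : Fin (n+1)) : visit (timeOf visit v) = v :=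
  Function.invFunOn_eq (h.exists_visit_eq v)

theorem timeOf_le (v : Fin (n+1)) : timeOf visit v ≤ n :=
  Function.invFunOn_mem (h.exists_visit_eq v)

theorem timeOf_visit {s : ℕ} (hs : s ≤ n) : timeOf visit (visit s) = s :=
  h.injOn.leftInvOn_invFunOn hs

theorem timeOf_zero : timeOf visit 0 = 0 := by
  simpa [h.visit_zero] using h.timeOf_visit (Nat.zero_le n)

theorem one_le_timeOf {v : Fin (n+1)} (hv : v ≠ 0) : 1 ≤ timeOf visit v :=
  Nat.one_le_iff_ne_zero.2 fun h' => hv (by rw [← h.visit_timeOf v, h', h.visit_zero])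

theorem sum_timeOf_sub_one :
    ∑ v ∈ Finset.univ.erase 0, (timeOf visit v - 1) = n.choose 2 := by
  rw [Nat.choose_two_right, ← Finset.sum_range_id]
  refine Finset.sum_nbij' (fun v => timeOf visit v - 1) (fun i => visit (i + 1)) ?_ ?_ ?_ ?_ ?_
  · intro v hv
    have := h.one_le_timeOf (Finset.ne_of_mem_erase hv)
    have := h.timeOf_le v
    simp only [Finset.mem_range]
    omega
  · intro i hi
    exact Finset.mem_erase.2 ⟨h.visit_ne_zero (by omega) (by simpa using hi), Finset.mem_univ _⟩
  · intro v hv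
    rw [Nat.sub_add_cancel (h.one_le_timeOf (Finset.ne_of_mem_erase hv)), h.visit_timeOf]
  · intro i hi
    rw [h.timeOf_visit (by simpa using hi)]
    rfl
  · intro v _
    rfl

end IsDFSPrefix

end DFSPrefix

section TreeDFS

variable {n : ℕ} {p : Fin (n+1) → Fin (n+1)} {t : ℕ} {visit : ℕ → Fin (n+1)}

/-- Depth-first search continues from the deepest vertex of the current path that still has
undiscovered children, and discovers the largest of them. -/
noncomputable def dfsKey (p : Fin (n+1) → Fin (n+1)) (c : Fin (n+1) × Fin (n+1)) :
    Lex (ℕ × Fin (n+1)) :=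
  toLex (depth p c.1, c.2)

theorem dfsKey_lt_of_depth_lt {u u' w w' : Fin (n+1)} (h : depth p u < depth p u') :
    dfsKey p (u, w) < dfsKey p (u', w') :=
  Prod.Lex.toLex_lt_toLex.2 (Or.inl h)

theorem le_of_dfsKey_le {u v w : Fin (n+1)} (h : dfsKey p (u, w) ≤ dfsKey p (u, v)) : w ≤ v := by
  rcases Prod.Lex.toLex_le_toLex.1 h with h | ⟨-, h⟩
  · exact absurd h (lt_irrefl _)
  · exact h

/-- Unlike `IsDFSPrefix`, this also constrains the undiscovered part of the tree `p`. -/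
structure IsTreeDFSPrefix (p : Fin (n+1) → Fin (n+1)) (t : ℕ) (visit : ℕ → Fin (n+1)) : Prop
    extends IsDFSPrefix p t visit where
  children_mem_discovered : ∀ s ≤ t, visit s ∉ ancestors p (visit t) →
    ∀ c, c ≠ 0 → p c = visit s → c ∈ discovered visit t
  lt_of_not_mem_discovered : ∀ s, 1 ≤ s → s ≤ t → ∀ w, w ∉ discovered visit t →
    p w = p (visit s) → w < visit s

theorem isTreeDFSPrefix_zero : IsTreeDFSPrefix p 0 fun _ => 0 where
  visit_zero := rfl
  injOn s hs s' hs' _ := by simp_all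
  parent_mem_ancestors_prev s hs1 hs := by omega
  lt_of_parent_eq s s' hs1 hss' hs' := by omega
  children_mem_discovered s _ hs := absurd self_mem_ancestors hs
  lt_of_not_mem_discovered s hs1 hs := by omega

namespace IsTreeDFSPrefix

variable (h : IsTreeDFSPrefix p t visit)
include h

theorem exists_candidate (hreach : ∀ v, ReachesRoot p 0 v) (ht : t < n) :
    ∃ v ∉ discovered visit t, p v ∈ ancestors p (visit t) := by
  have hzero : (0 : Fin (n+1)) ∈ discovered visit t :=
    h.visit_zero ▸ visit_mem_discovered (Nat.zero_le t)
  have hcard : (discovered visit t).card < (Finset.univ : Finset (Fin (n+1))).card := by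
    have : (discovered visit t).card ≤ t + 1 := Finset.card_image_le.trans (by simp)
    rw [Finset.card_univ, Fintype.card_fin]
    omega
  obtain ⟨w, -, hw⟩ := Finset.exists_mem_notMem_of_card_lt_card hcard
  obtain ⟨c, hc, hpc⟩ := exists_not_mem_parent_mem hzero hw (hreach w)
  refine ⟨c, hc, ?_⟩
  by_contra hoff
  obtain ⟨s, hs, hsc⟩ := mem_discovered.1 hpc
  exact hc (h.children_mem_discovered s hs (hsc ▸ hoff) c (by rintro rfl; exact hc hzero) hsc.symm)

theorem succ (h0 : p 0 = 0) {v : Fin (n+1)} (hv : v ∉ discovered visit t)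
    (hpv : p v ∈ ancestors p (visit t))
    (hmax : ∀ w ∉ discovered visit t, p w ∈ ancestors p (visit t) →
      dfsKey p (p w, w) ≤ dfsKey p (p v, v)) :
    IsTreeDFSPrefix p (t + 1) (Function.update visit (t + 1) v) := by
  have hnew : Function.update visit (t + 1) v (t + 1) = v := Function.update_self _ _ _
  have hold : ∀ s ≤ t, Function.update visit (t + 1) v s = visit s := fun s hs =>
    Function.update_of_ne (by omega) _ _
  have hext := h.extend h0 hv hpv fun s hs1 hs heq =>
    h.lt_of_not_mem_discovered s hs1 hs v hv heq.symm
  rw [Function.update_eq_self] at hext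
  refine ⟨hext, ?_, ?_⟩
  · intro s hs hoff c hc0 hpc
    rw [hnew] at hoff
    rw [discovered_update_succ]
    by_contra hcnew
    rcases Nat.lt_or_ge s (t + 1) with hst | hst
    · rw [hold s (by omega)] at hoff hpc
      by_cases hon : visit s ∈ ancestors p (visit t)
      · have hoff' : visit s ∉ ancestors p (p v) := fun hmem => hoff (by
          rw [ancestors_eq_insert_parent]
          exact Finset.mem_insert_of_mem hmem)
        have hkey := hmax c (fun hc => hcnew (Finset.mem_insert_of_mem hc)) (hpc ▸ hon)
        rw [hpc] at hkey
        exact absurd hkey (not_le.2 (dfsKey_lt_of_depth_lt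
          (depth_lt_of_not_mem_ancestors h0 (h.reachesRoot h0 le_rfl) hon hpv hoff')))
      · exact hcnew (Finset.mem_insert_of_mem
          (h.children_mem_discovered s (by omega) hon c hc0 hpc))
    · obtain rfl : s = t + 1 := by omega
      exact hoff (by rw [hnew]; exact self_mem_ancestors)
  · intro s hs1 hs w hw hpw
    rw [discovered_update_succ, Finset.mem_insert, not_or] at hw
    rcases Nat.lt_or_ge s (t + 1) with hst | hst
    · rw [hold s (by omega)] at hpw ⊢
      exact h.lt_of_not_mem_discovered s hs1 (by omega) w hw.2 hpw
    · obtain rfl : s = t + 1 := by omega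
      rw [hnew] at hpw ⊢
      have hkey := hmax w hw.2 (hpw ▸ hpv)
      rw [hpw] at hkey
      exact lt_of_le_of_ne (le_of_dfsKey_le hkey) hw.1

end IsTreeDFSPrefix

theorem exists_isTreeDFSPrefix (h0 : p 0 = 0) (hreach : ∀ v, ReachesRoot p 0 v) {t : ℕ}
    (ht : t ≤ n) : ∃ visit, IsTreeDFSPrefix p t visit := by
  classical
  induction t with
  | zero => exact ⟨_, isTreeDFSPrefix_zero⟩
  | succ t ih =>
    obtain ⟨visit, h⟩ := ih (by omega)
    set cand := (Finset.univ.filter fun w => w ∉ discovered visit t ∧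
      p w ∈ ancestors p (visit t))
    obtain ⟨v, hv, hcv⟩ := h.exists_candidate hreach (by omega)
    obtain ⟨v, hv, hmax⟩ := cand.exists_max_image (fun w => dfsKey p (p w, w))
      ⟨v, by simp [cand, hv, hcv]⟩
    simp only [cand, Finset.mem_filter, Finset.mem_univ, true_and] at hv hmax
    exact ⟨_, h.succ h0 hv.1 hv.2 fun w hw hpw => hmax w ⟨hw, hpw⟩⟩

theorem RootedSpanningTree.exists_isDFSPrefix {G : SimpleGraph (Fin (n+1))}
    (T : RootedSpanningTree G 0) : ∃ visit, IsDFSPrefix T.parent n visit :=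
  (exists_isTreeDFSPrefix T.parent_root T.reaches_root le_rfl).imp fun _ h => h.toIsDFSPrefix

end TreeDFS

namespace IsDFSPrefix

variable {n : ℕ} {p p' : Fin (n+1) → Fin (n+1)} {visit visit' : ℕ → Fin (n+1)}

theorem exists_ge_visit_eq (h : IsDFSPrefix p n visit) (h' : IsDFSPrefix p' n visit')
    {t : ℕ} (ht : t ≤ n) (hpre : ∀ s < t, visit s = visit' s) :
    ∃ t' ≥ t, t' ≤ n ∧ visit' t' = visit t := by
  obtain ⟨t', ht', heq⟩ := h'.exists_visit_eq (visit t)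
  refine ⟨t', Nat.le_of_not_lt fun hlt => ?_, ht', heq⟩
  have := h.injOn (show t' ≤ n from ht') ht ((hpre t' hlt).trans heq)
  omega

variable (h0 : p 0 = 0) (hreach : ∀ v, ReachesRoot p 0 v)
  (h : IsDFSPrefix p n visit) (h' : IsDFSPrefix p n visit')
include h0 hreach h h'

/-- The second order discovers `visit t` later, while its parent is still on the current path,
so at time `t` it has not yet backtracked above `p (visit t)`. -/
theorem parent_eq_of_mem_ancestors {t : ℕ} (ht1 : 1 ≤ t) (ht : t ≤ n)
    (hpre : ∀ s < t, visit s = visit' s) (hne : visit t ≠ visit' t)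
    (hmem : p (visit' t) ∈ ancestors p (p (visit t))) : p (visit' t) = p (visit t) := by
  obtain ⟨t₁, ht₁, ht₁n, heq⟩ := h.exists_ge_visit_eq h' ht hpre
  have ht₁t : t < t₁ := lt_of_le_of_ne ht₁ fun h'' => hne (by rw [← heq, h''])
  have hprev : p (visit t) ∈ ancestors p (visit' (t - 1)) :=
    hpre (t - 1) (by omega) ▸ h.parent_mem_ancestors_prev t ht1 ht
  obtain ⟨s, hs, hseq⟩ := h'.exists_visit_eq_of_mem_ancestors h0 (by omega) hprev
  have hstack := h'.parent_mem_ancestors_prev t₁ (by omega) ht₁n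
  rw [heq, ← hseq] at hstack
  have := h'.mem_ancestors_parent_of_lt (s₀ := t) (by omega) (by omega) (by omega) hstack
  rw [hseq] at this
  exact eq_of_mem_ancestors_of_mem_ancestors h0 (hreach _) hmem this

theorem eq_of_isDFSPrefix {t : ℕ} (ht : t ≤ n) : visit t = visit' t := by
  induction t using Nat.strong_induction_on with
  | _ t ih =>
    have hpre : ∀ s < t, visit s = visit' s := fun s hs => ih s hs (by omega)
    rcases Nat.eq_zero_or_pos t with rfl | ht1
    · rw [h.visit_zero, h'.visit_zero]
    by_contra hne
    have hpar : p (visit' t) = p (visit t) := by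
      have hmem : p (visit t) ∈ ancestors p (visit (t - 1)) := h.parent_mem_ancestors_prev t ht1 ht
      have hmem' : p (visit' t) ∈ ancestors p (visit (t - 1)) :=
        hpre (t - 1) (by omega) ▸ h'.parent_mem_ancestors_prev t ht1 ht
      rcases mem_ancestors_or_mem_ancestors hmem' hmem with hm | hm
      · exact parent_eq_of_mem_ancestors h0 hreach h h' ht1 ht hpre hne hm
      · exact (parent_eq_of_mem_ancestors h0 hreach h' h ht1 ht (fun s hs => (hpre s hs).symm)
          (Ne.symm hne) hm).symm
    -- Each of the two siblings is discovered after the other by one of the orders.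
    obtain ⟨t₁, ht₁, ht₁n, heq₁⟩ := h.exists_ge_visit_eq h' ht hpre
    obtain ⟨t₂, ht₂, ht₂n, heq₂⟩ := h'.exists_ge_visit_eq h ht fun s hs => (hpre s hs).symm
    have ht₁t : t < t₁ := lt_of_le_of_ne ht₁ fun h'' => hne (by rw [← heq₁, h''])
    have ht₂t : t < t₂ := lt_of_le_of_ne ht₂ fun h'' => hne (by rw [← heq₂, h''])
    have hlt : visit' t < visit t := heq₂ ▸ h.lt_of_parent_eq t t₂ ht1 ht₂t ht₂n (heq₂ ▸ hpar.symm)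
    have hlt' : visit t < visit' t :=
      heq₁ ▸ h'.lt_of_parent_eq t t₁ ht1 ht₁t ht₁n (heq₁ ▸ hpar)
    exact lt_asymm hlt hlt'

end IsDFSPrefix

theorem sDeg_top {n : ℕ} {S : Finset (Fin (n+1))} {i : Fin (n+1)} (hi : i ∈ S) :
    sDeg (⊤ : SimpleGraph (Fin (n+1))) S i = n + 1 - S.card := by
  have hset : {j | (⊤ : SimpleGraph (Fin (n+1))).Adj i j ∧ j ∉ S} = ↑(Finset.univ \ S) := by
    ext j
    simp only [SimpleGraph.top_adj, Set.mem_ofPred_eq, Finset.coe_sdiff, Finset.coe_univ,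
      Set.mem_sdiff, Set.mem_univ, true_and, Finset.mem_coe]
    exact ⟨And.right, fun hj => ⟨fun h => hj (h ▸ hi), hj⟩⟩
  rw [sDeg, hset, Set.ncard_coe_finset, Finset.card_sdiff_of_subset (Finset.subset_univ S),
    Finset.card_univ, Fintype.card_fin]

theorem mem_ancestors_parent_iff_isAncestor {n : ℕ} {p : Fin (n+1) → Fin (n+1)}
    {u v : Fin (n+1)} : u ∈ ancestors p (p v) ↔ IsAncestor p u v := by
  rw [mem_ancestors, IsAncestor]
  constructor
  · rintro ⟨k, rfl⟩
    exact ⟨k + 1, k.succ_pos, Function.iterate_succ_apply p k v⟩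
  · rintro ⟨_ | k, hk, rfl⟩
    · omega
    · exact ⟨k, (Function.iterate_succ_apply p k v).symm⟩

theorem invNum_eq_sum_inversionsAt {n : ℕ} (p : Fin (n+1) → Fin (n+1)) :
    invNum p = ∑ v, inversionsAt p v := by
  classical
  have hfiber : ∀ v, (Finset.univ.filter fun c : Fin (n+1) × Fin (n+1) =>
      IsInversion p c.1 c.2 ∧ c.2 = v) =
      ((ancestors p (p v)).filter (v < ·)).image (·, v) := by
    intro v
    ext ⟨x, y⟩
    simp only [Finset.mem_filter, Finset.mem_univ, true_and, Finset.mem_image, Prod.mk.injEq,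
      IsInversion, ← mem_ancestors_parent_iff_isAncestor]
    constructor
    · rintro ⟨⟨hx, hlt⟩, rfl⟩
      exact ⟨x, ⟨hx, hlt⟩, rfl, rfl⟩
    · rintro ⟨x, ⟨hx, hlt⟩, rfl, rfl⟩
      exact ⟨⟨hx, hlt⟩, rfl⟩
  rw [invNum, Set.ncard_eq_toFinset_card', Set.toFinset_ofPred,
    Finset.card_eq_sum_card_fiberwise (f := Prod.snd) (t := Finset.univ) (by simp)]
  refine Finset.sum_congr rfl fun v _ => ?_
  rw [Finset.filter_filter, hfiber, Finset.card_image_of_injective _ fun a b h => by simpa using h]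
  rfl

section ParkingFunction

variable {n : ℕ} {G : SimpleGraph (Fin (n+1))}

noncomputable def RootedSpanningTree.dfsVisit (T : RootedSpanningTree G 0) : ℕ → Fin (n+1) :=
  T.exists_isDFSPrefix.choose

theorem RootedSpanningTree.isDFSPrefix_dfsVisit (T : RootedSpanningTree G 0) :
    IsDFSPrefix T.parent n T.dfsVisit :=
  T.exists_isDFSPrefix.choose_spec

/-- The subtraction never truncates, see `toParkingFunction_add_inversionsAt`. -/
noncomputable def RootedSpanningTree.toParkingFunction (T : RootedSpanningTree G 0)
    (v : Fin (n+1)) : ℕ :=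
  timeOf T.dfsVisit v - 1 - inversionsAt T.parent v

namespace RootedSpanningTree

variable (T : RootedSpanningTree G 0)

theorem toParkingFunction_zero : T.toParkingFunction 0 = 0 := by
  simp [toParkingFunction, T.isDFSPrefix_dfsVisit.timeOf_zero]

theorem toParkingFunction_add_inversionsAt {v : Fin (n+1)} (hv : v ≠ 0) :
    T.toParkingFunction v + inversionsAt T.parent v = timeOf T.dfsVisit v - 1 := by
  have h := T.isDFSPrefix_dfsVisit
  have := h.inversionsAt_le T.parent_root (h.one_le_timeOf hv) (h.timeOf_le v)
  rw [h.visit_timeOf] at this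
  rw [toParkingFunction]
  omega

theorem degPF_toParkingFunction_add_invNum :
    degPF 0 T.toParkingFunction + invNum T.parent = n.choose 2 := by
  have hroot : inversionsAt T.parent 0 = 0 := by
    rw [inversionsAt, T.parent_root, numLargerAncestors_root T.parent_root le_rfl]
  rw [degPF, invNum_eq_sum_inversionsAt, ← Finset.add_sum_erase _ _ (Finset.mem_univ 0), hroot,
    zero_add, ← Finset.sum_add_distrib, ← T.isDFSPrefix_dfsVisit.sum_timeOf_sub_one]
  exact Finset.sum_congr rfl fun v hv =>
    T.toParkingFunction_add_inversionsAt (Finset.ne_of_mem_erase hv)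

/-- Witness: the vertex of `S` discovered first, since all vertices discovered before it lie
outside `S`. -/
theorem isParkingFunction_toParkingFunction :
    IsParkingFunction (⊤ : SimpleGraph (Fin (n+1))) 0 T.toParkingFunction := by
  intro S hS hS0
  have h := T.isDFSPrefix_dfsVisit
  obtain ⟨v, hvS, hmin⟩ := S.exists_min_image (timeOf T.dfsVisit) hS
  set t₀ := timeOf T.dfsVisit v
  have ht₀ := h.timeOf_le v
  set D := (Finset.range t₀).image T.dfsVisit
  have hD : D.card = t₀ := by
    rw [Finset.card_image_of_injOn fun a ha b hb => h.injOn (show a ≤ n by simp at ha; omega)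
      (show b ≤ n by simp at hb; omega), Finset.card_range]
  have hdisj : Disjoint D S := by
    refine Finset.disjoint_left.2 fun x hx hxS => ?_
    obtain ⟨s, hs, rfl⟩ := Finset.mem_image.1 hx
    have := hmin _ hxS
    rw [Finset.mem_range] at hs
    rw [h.timeOf_visit (by omega)] at this
    omega
  have hcard := (Finset.card_union_of_disjoint hdisj).symm.trans_le (Finset.card_le_univ _)
  rw [Fintype.card_fin, hD] at hcard
  refine ⟨v, hvS, ?_⟩
  rw [sDeg_top hvS, toParkingFunction]
  have := h.one_le_timeOf fun h' => hS0 (h' ▸ hvS)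
  omega

end RootedSpanningTree

end ParkingFunction

namespace IsDFSPrefix

variable {n : ℕ} {p p' : Fin (n+1) → Fin (n+1)} {visit visit' : ℕ → Fin (n+1)} {t : ℕ}

theorem ancestors_eq_of_agree (h : IsDFSPrefix p n visit) (h0 : p 0 = 0) (h0' : p' 0 = 0)
    (ht : t ≤ n) (hpre : ∀ s < t, visit s = visit' s)
    (hpar : ∀ s < t, p (visit s) = p' (visit' s)) {s : ℕ} (hs : s < t) :
    ancestors p' (visit s) = ancestors p (visit s) := by
  induction s using Nat.strong_induction_on with
  | _ s ih =>
    rcases Nat.eq_zero_or_pos s with rfl | hs1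
    · rw [h.visit_zero, ancestors_root h0, ancestors_root h0']
    · obtain ⟨s', hs', heq⟩ := h.exists_parent_eq_visit h0 hs1 (by omega)
      have hp' : p' (visit s) = p (visit s) := by rw [hpar s hs, hpre s hs]
      rw [ancestors_eq_insert_parent, ancestors_eq_insert_parent (p := p), hp', heq,
        ih s' hs' (by omega)]

theorem ancestors_parent_eq_of_agree (h : IsDFSPrefix p n visit) (h' : IsDFSPrefix p' n visit')
    (h0 : p 0 = 0) (h0' : p' 0 = 0) (ht1 : 1 ≤ t) (ht : t ≤ n)
    (hpre : ∀ s < t, visit s = visit' s) (hpar : ∀ s < t, p (visit s) = p' (visit' s)) :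
    ancestors p' (p' (visit' t)) = ancestors p (p' (visit' t)) := by
  obtain ⟨s, hs, hu⟩ := h'.exists_visit_eq_of_mem_ancestors h0' (s := t - 1) (by omega)
    (h'.parent_mem_ancestors_prev t ht1 ht)
  rw [← hu, ← hpre s (by omega)]
  exact h.ancestors_eq_of_agree h0 h0' ht hpre hpar (by omega)

variable (h0 : p 0 = 0) (h0' : p' 0 = 0)
  (hreach : ∀ v, ReachesRoot p 0 v) (hreach' : ∀ v, ReachesRoot p' 0 v)
  (h : IsDFSPrefix p n visit) (h' : IsDFSPrefix p' n visit')
  (hbal : ∀ v ≠ 0, timeOf visit v + inversionsAt p' v = timeOf visit' v + inversionsAt p v)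
include h0 h0' hreach hreach' h h' hbal

section FirstDifference

variable (ht1 : 1 ≤ t) (ht : t ≤ n)
  (hpre : ∀ s < t, visit s = visit' s) (hpar : ∀ s < t, p (visit s) = p' (visit' s))
include ht1 ht hpre hpar

omit hreach hbal in
/-- Vertices discovered before `t` that are still on the path at time `t₁` lie above
`p' (visit' t)`. -/
theorem filter_ancestors_subset {t₁ : ℕ} (ht₁ : t ≤ t₁) (ht₁n : t₁ ≤ n)
    (hw : visit' t₁ = visit t) :
    (ancestors p' (p' (visit t))).filter (visit t < ·) ⊆
      (ancestors p (p' (visit' t))).filter (visit t < ·) ∪ (Finset.Ico t t₁).image visit' := by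
  intro x hx
  obtain ⟨hx, hwx⟩ := Finset.mem_filter.1 hx
  have hx₁ : x ∈ ancestors p' (visit' t₁) := hw ▸ ancestors_subset_of_mem parent_mem_ancestors hx
  obtain ⟨s, hs, rfl⟩ := h'.exists_visit_eq_of_mem_ancestors h0' ht₁n hx₁
  have hst₁ : s < t₁ := h'.lt_of_mem_ancestors h0' ht₁n (by omega) hx₁ fun hs' => by
    rw [hs', hw] at hx
    exact not_mem_ancestors_parent h0' (hreach' _) (h.visit_ne_zero ht1 ht) hx
  rcases Nat.lt_or_ge s t with hst | hst
  · refine Finset.mem_union_left _ (Finset.mem_filter.2 ⟨?_, hwx⟩)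
    rw [← ancestors_parent_eq_of_agree h h' h0 h0' ht1 ht hpre hpar]
    exact h'.mem_ancestors_parent_of_lt ht₁ ht₁n hst hx₁
  · exact Finset.mem_union_right _ (Finset.mem_image.2 ⟨s, Finset.mem_Ico.2 ⟨hst, hst₁⟩, rfl⟩)

omit hreach in
/-- By `hbal`, both bounds of `filter_ancestors_subset` are attained. -/
theorem le_and_numLargerAncestors_eq (hmem : p' (visit' t) ∈ ancestors p (p (visit t))) :
    visit t ≤ visit' t ∧ numLargerAncestors p (p' (visit' t)) (visit t) =
      numLargerAncestors p (p (visit t)) (visit t) := by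
  obtain ⟨t₁, ht₁, ht₁n, hw⟩ := h.exists_ge_visit_eq h' ht hpre
  have hsub := filter_ancestors_subset h0 h0' hreach' h h' ht1 ht hpre hpar ht₁ ht₁n hw
  have hbalw := hbal (visit t) (h.visit_ne_zero ht1 ht)
  rw [h.timeOf_visit ht, ← hw, h'.timeOf_visit ht₁n, hw] at hbalw
  set w := visit t
  set S := (ancestors p' (p' w)).filter (w < ·)
  set A := (ancestors p (p' (visit' t))).filter (w < ·)
  set I := (Finset.Ico t t₁).image visit'
  have hScard : S.card = inversionsAt p' w := rfl
  have hAcard : A.card = numLargerAncestors p (p' (visit' t)) w := rfl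
  have hinv : inversionsAt p w = numLargerAncestors p (p w) w := rfl
  have hI : I.card ≤ t₁ - t := Finset.card_image_le.trans (by simp)
  have hA : A.card ≤ numLargerAncestors p (p w) w := numLargerAncestors_mono hmem w
  have hS : S.card ≤ A.card + I.card :=
    (Finset.card_le_card hsub).trans (Finset.card_union_le _ _)
  have hSI : S = A ∪ I := Finset.eq_of_subset_of_card_le hsub <| by
    have := Finset.card_union_le A I
    omega
  refine ⟨?_, by omega⟩
  rcases ht₁.eq_or_lt with heq | hlt
  · rw [← hw, heq]
  · have : visit' t ∈ S := hSI ▸ Finset.mem_union_right _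
      (Finset.mem_image.2 ⟨t, Finset.mem_Ico.2 ⟨le_rfl, hlt⟩, rfl⟩)
    exact (Finset.mem_filter.1 this).2.le

/-- If the parents differ, the child `c` of `p' (visit' t)` on the path to `p (visit t)` is smaller
than `visit t` by the equality of counts, and larger than its later sibling `visit' t`. -/
theorem false_of_mem_ancestors (hmem : p' (visit' t) ∈ ancestors p (p (visit t)))
    (hlt : p' (visit' t) = p (visit t) → visit' t < visit t) : False := by
  obtain ⟨hle, hnum⟩ := le_and_numLargerAncestors_eq h0 h0' hreach' h h' hbal ht1 ht hpre hpar hmem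
  by_cases hu : p' (visit' t) = p (visit t)
  · exact absurd (hlt hu) (not_lt.2 hle)
  obtain ⟨c, hpc, hc, hc'⟩ := exists_child_mem_ancestors h0 (hreach _) hmem hu
  obtain ⟨s₀, hs₀, rfl⟩ := h.exists_visit_eq_of_mem_ancestors h0 (s := t - 1) (by omega)
    (ancestors_subset_of_mem (h.parent_mem_ancestors_prev t ht1 ht) hc)
  have hs₀1 : 1 ≤ s₀ := Nat.one_le_iff_ne_zero.2 fun hs₀ => hc' <| by
    rw [hs₀, h.visit_zero]
    exact root_mem_ancestors (hreach _)
  have hlt₀ : visit s₀ < visit t := by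
    refine lt_of_le_of_ne (not_lt.1 fun hlt' => ?_) fun heq => ?_
    · exact absurd hnum (numLargerAncestors_lt hmem hc hc' hlt').ne
    · exact absurd (h.injOn (show s₀ ≤ n by omega) ht heq) (by omega)
  have hsib := h'.lt_of_parent_eq s₀ t hs₀1 (by omega) ht
    (by rw [← hpar s₀ (by omega), hpc])
  rw [← hpre s₀ (by omega)] at hsib
  exact lt_irrefl _ (hle.trans_lt (hsib.trans hlt₀))

end FirstDifference

theorem eq_of_timeOf_add_inversionsAt : p = p' := by
  have key : ∀ t ≤ n, visit t = visit' t ∧ p (visit t) = p' (visit' t) := by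
    intro t
    induction t using Nat.strong_induction_on with
    | _ t ih =>
      intro ht
      rcases Nat.eq_zero_or_pos t with rfl | ht1
      · rw [h.visit_zero, h'.visit_zero, h0, h0']
        exact ⟨rfl, rfl⟩
      have hpre : ∀ s < t, visit s = visit' s := fun s hs => (ih s hs (by omega)).1
      have hpar : ∀ s < t, p (visit s) = p' (visit' s) := fun s hs => (ih s hs (by omega)).2
      have hbal' : ∀ v ≠ 0, timeOf visit' v + inversionsAt p v =
          timeOf visit v + inversionsAt p' v := fun v hv => (hbal v hv).symm
      have hpre' : ∀ s < t, visit' s = visit s := fun s hs => (hpre s hs).symm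
      have hpar' : ∀ s < t, p' (visit' s) = p (visit s) := fun s hs => (hpar s hs).symm
      have hfalse := false_of_mem_ancestors h0 h0' hreach hreach' h h' hbal ht1 ht hpre hpar
      have hfalse' := false_of_mem_ancestors h0' h0 hreach' hreach h' h hbal' ht1 ht hpre' hpar'
      by_contra hdiff
      by_cases hu : p' (visit' t) = p (visit t)
      · rcases lt_trichotomy (visit' t) (visit t) with hlt | heq | hlt
        · exact hfalse (hu ▸ self_mem_ancestors) fun _ => hlt
        · exact hdiff ⟨heq.symm, hu.symm⟩
        · exact hfalse' (hu ▸ self_mem_ancestors) fun _ => hlt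
      · have hmem : p (visit t) ∈ ancestors p (visit (t - 1)) :=
          h.parent_mem_ancestors_prev t ht1 ht
        have hmem' : p' (visit' t) ∈ ancestors p (visit (t - 1)) := by
          rw [← h.ancestors_eq_of_agree h0 h0' ht hpre hpar (show t - 1 < t by omega),
            hpre (t - 1) (by omega)]
          exact h'.parent_mem_ancestors_prev t ht1 ht
        rcases mem_ancestors_or_mem_ancestors hmem' hmem with he | he
        · exact hfalse he fun h'' => absurd h'' hu
        · rw [← ancestors_parent_eq_of_agree h h' h0 h0' ht1 ht hpre hpar] at he
          exact hfalse' he fun h'' => absurd h''.symm hu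
  funext v
  obtain ⟨t, ht, rfl⟩ := h.exists_visit_eq v
  rw [(key t ht).2, ← (key t ht).1]

end IsDFSPrefix

theorem RootedSpanningTree.ext {n : ℕ} {G : SimpleGraph (Fin (n+1))}
    {T T' : RootedSpanningTree G 0} (h : T.parent = T'.parent) : T = T' := by
  cases T
  cases T'
  cases h
  rfl

theorem RootedSpanningTree.toParkingFunction_injective {n : ℕ} {G : SimpleGraph (Fin (n+1))} :
    Function.Injective (toParkingFunction : RootedSpanningTree G 0 → Fin (n+1) → ℕ) := by
  intro T T' hTT'
  refine RootedSpanningTree.ext <| IsDFSPrefix.eq_of_timeOf_add_inversionsAt T.parent_root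
    T'.parent_root T.reaches_root T'.reaches_root T.isDFSPrefix_dfsVisit
    T'.isDFSPrefix_dfsVisit fun v hv => ?_
  have h₁ := T.toParkingFunction_add_inversionsAt hv
  have h₂ := T'.toParkingFunction_add_inversionsAt hv
  have := T.isDFSPrefix_dfsVisit.one_le_timeOf hv
  have := T'.isDFSPrefix_dfsVisit.one_le_timeOf hv
  rw [hTT'] at h₁
  omega

section Reconstruction

variable {n : ℕ} {P : Fin (n+1) → ℕ} {t : ℕ} {visit : ℕ → Fin (n+1)} {q : Fin (n+1) → Fin (n+1)}

/-- The state after `t` steps of rebuilding a tree from `P`. By the intermediate value property,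
the last field lets every undiscovered vertex be attached somewhere on the current path. -/
structure IsPartialPreimage (P : Fin (n+1) → ℕ) (t : ℕ) (visit : ℕ → Fin (n+1))
    (q : Fin (n+1) → Fin (n+1)) : Prop extends IsDFSPrefix q t visit where
  parent_zero : q 0 = 0
  add_inversionsAt : ∀ s, 1 ≤ s → s ≤ t → P (visit s) + inversionsAt q (visit s) = s - 1
  le_add_numLargerAncestors : ∀ w ∉ discovered visit t, t ≤ P w + numLargerAncestors q (visit t) w

theorem isPartialPreimage_zero (P : Fin (n+1) → ℕ) :
    IsPartialPreimage P 0 (fun _ => 0) id where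
  visit_zero := rfl
  injOn s hs s' hs' _ := by simp_all
  parent_mem_ancestors_prev s hs1 hs := by omega
  lt_of_parent_eq s s' hs1 hss' hs' := by omega
  parent_zero := rfl
  add_inversionsAt s hs1 hs := by omega
  le_add_numLargerAncestors _ _ := Nat.zero_le _

namespace IsPartialPreimage

variable (h : IsPartialPreimage P t visit q)
include h

theorem exists_candidate (hP : IsParkingFunction (⊤ : SimpleGraph (Fin (n+1))) 0 P)
    (ht : t < n) : ∃ u ∈ ancestors q (visit t), ∃ w ∉ discovered visit t,
      P w + numLargerAncestors q u w = t := by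
  set S := Finset.univ \ discovered visit t
  have hS : S.card = n - t := by
    rw [Finset.card_sdiff_of_subset (Finset.subset_univ _), Finset.card_univ, Fintype.card_fin,
      h.card_discovered]
    omega
  have h0S : (0 : Fin (n+1)) ∉ S := by
    simpa [S] using h.visit_zero ▸ visit_mem_discovered (Nat.zero_le t)
  obtain ⟨w, hwS, hPw⟩ := hP S (Finset.card_pos.1 (by omega)) h0S
  rw [sDeg_top hwS, hS] at hPw
  have hw : w ∉ discovered visit t := (Finset.mem_sdiff.1 hwS).2
  have := h.le_add_numLargerAncestors w hw
  obtain ⟨u, hu, hnum⟩ := exists_mem_ancestors_numLargerAncestors_eq h.parent_zero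
    (h.reachesRoot h.parent_zero le_rfl) (Fin.zero_le w) (k := t - P w) (by omega)
  exact ⟨u, hu, w, hw, by omega⟩

variable {u v : Fin (n+1)} (hu : u ∈ ancestors q (visit t)) (hv : v ∉ discovered visit t)
  (hPv : P v + numLargerAncestors q u v = t)
  (hmax : ∀ x ∈ ancestors q (visit t), ∀ w ∉ discovered visit t,
    P w + numLargerAncestors q x w = t → dfsKey q (x, w) ≤ dfsKey q (u, v))
include hu hv hPv hmax

/-- Otherwise the child of `u` on the current path would be a deeper candidate for `v`. -/
theorem lt_visit_of_parent_eq {s : ℕ} (hs1 : 1 ≤ s) (hs : s ≤ t) (hqs : q (visit s) = u) :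
    v < visit s := by
  have h0 := h.parent_zero
  have hreach := h.reachesRoot h0 (le_refl t)
  obtain ⟨s', hs', hs'u⟩ := h.exists_parent_eq_visit h0 hs1 hs
  rw [hqs] at hs'u
  have hne : u ≠ visit t := by
    rintro rfl
    exact absurd (h.injOn (show s' ≤ t by omega) (le_refl t) hs'u.symm) (by omega)
  obtain ⟨c, hqc, hc, hcu⟩ := exists_child_mem_ancestors h0 hreach hu hne
  obtain ⟨r, hr, rfl⟩ := h.exists_visit_eq_of_mem_ancestors h0 le_rfl hc
  have hsr : s ≤ r := Nat.le_of_not_lt fun hrs =>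
    hcu (hqs ▸ h.mem_ancestors_parent_of_lt hs le_rfl hrs hc)
  have hcs : visit r ≤ visit s := by
    rcases hsr.eq_or_lt with rfl | hlt
    · exact le_rfl
    · exact (h.lt_of_parent_eq s r hs1 hlt hr (by rw [hqs, hqc])).le
  refine lt_of_lt_of_le (not_le.1 fun hle => ?_) hcs
  have hnum : numLargerAncestors q (visit r) v = numLargerAncestors q u v := by
    rw [numLargerAncestors_eq_parent_of_not_lt (not_lt.2 hle), hqc]
  have hdepth : depth q u < depth q (visit r) :=
    depth_lt_of_mem_ancestors h0 (hreach.of_mem_ancestors h0 hc) (hqc ▸ parent_mem_ancestors)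
      fun heq => hcu (heq ▸ self_mem_ancestors)
  exact absurd (hmax _ hc v hv (hnum ▸ hPv)) (not_le.2 (dfsKey_lt_of_depth_lt hdepth))

omit hv hPv in
theorem succ_le_add_numLargerAncestors {w : Fin (n+1)} (hw : w ∉ discovered visit t)
    (hwv : w ≠ v) : t + 1 ≤ P w + (numLargerAncestors q u w + if w < v then 1 else 0) := by
  have h0 := h.parent_zero
  have hreach := h.reachesRoot h0 (le_refl t)
  by_contra hcon
  have hlow := h.le_add_numLargerAncestors w hw
  have hPw : P w ≤ t := by split_ifs at hcon <;> omega
  obtain ⟨x, hx, hxw⟩ := exists_mem_ancestors_numLargerAncestors_eq h0 hreach (Fin.zero_le w)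
    (k := t - P w) (by omega)
  by_cases hlt : numLargerAncestors q u w < t - P w
  · have hxu : x ∉ ancestors q u := fun hxu => by
      have := numLargerAncestors_mono hxu w
      omega
    exact absurd (hmax x hx w hw (by omega))
      (not_le.2 (dfsKey_lt_of_depth_lt (depth_lt_of_not_mem_ancestors h0 hreach hx hu hxu)))
  · have hwv' : ¬ w < v := fun hwv' => by
      rw [if_pos hwv'] at hcon
      omega
    rw [if_neg hwv'] at hcon
    exact hwv' (lt_of_le_of_ne (le_of_dfsKey_le (hmax u hu w hw (by omega))) hwv)

theorem succ :
    IsPartialPreimage P (t + 1) (Function.update visit (t + 1) v) (Function.update q v u) := by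
  have h0 := h.parent_zero
  have hv0 : v ≠ 0 := fun hv0 => hv (hv0 ▸ h.visit_zero ▸ visit_mem_discovered (Nat.zero_le t))
  have hnew : Function.update visit (t + 1) v (t + 1) = v := Function.update_self _ _ _
  have hold : ∀ s ≤ t, Function.update visit (t + 1) v s = visit s := fun s hs =>
    Function.update_of_ne (by omega) _ _
  have hanc : ∀ s ≤ t, ancestors (Function.update q v u) (visit s) = ancestors q (visit s) :=
    fun s hs => ancestors_update_of_not_mem (h.not_mem_ancestors_of_not_mem_discovered h0 hv hs)
  obtain ⟨s₂, hs₂, hus₂⟩ := h.exists_visit_eq_of_mem_ancestors h0 le_rfl hu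
  have hvu : v ∉ ancestors q u := hus₂ ▸ h.not_mem_ancestors_of_not_mem_discovered h0 hv hs₂
  have hu' : ancestors (Function.update q v u) u = ancestors q u := hus₂ ▸ hanc s₂ hs₂
  have hqv : Function.update q v u v = u := Function.update_self _ _ _
  refine ⟨h.extend h0 hv hu fun s hs1 hs hqs => h.lt_visit_of_parent_eq hu hv hPv hmax hs1 hs hqs,
    by rw [Function.update_of_ne (Ne.symm hv0), h0], ?_, ?_⟩
  · intro s hs1 hs
    rcases Nat.lt_or_ge s (t + 1) with hst | hst
    · obtain ⟨s', hs', hqs⟩ := h.exists_parent_eq_visit h0 hs1 (by omega)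
      have hne : visit s ≠ v := fun heq => hv (heq ▸ visit_mem_discovered (by omega))
      rw [hold s (by omega), inversionsAt, Function.update_of_ne hne, hqs, numLargerAncestors,
        hanc s' (by omega), ← hqs]
      exact h.add_inversionsAt s hs1 (by omega)
    · obtain rfl : s = t + 1 := by omega
      rw [hnew, inversionsAt, hqv, numLargerAncestors, hu']
      exact hPv
  · intro w hw
    rw [discovered_update_succ, Finset.mem_insert, not_or] at hw
    rw [hnew, numLargerAncestors_eq_parent_add (by rw [hqv, hu']; exact hvu), hqv,
      numLargerAncestors, hu']
    exact h.succ_le_add_numLargerAncestors hu hmax hw.2 hw.1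

end IsPartialPreimage

theorem exists_isPartialPreimage (hP : IsParkingFunction (⊤ : SimpleGraph (Fin (n+1))) 0 P)
    {t : ℕ} (ht : t ≤ n) : ∃ visit q, IsPartialPreimage P t visit q := by
  classical
  induction t with
  | zero => exact ⟨_, _, isPartialPreimage_zero P⟩
  | succ t ih =>
    obtain ⟨visit, q, h⟩ := ih (by omega)
    set cand := Finset.univ.filter fun c : Fin (n+1) × Fin (n+1) => c.1 ∈ ancestors q (visit t) ∧
      c.2 ∉ discovered visit t ∧ P c.2 + numLargerAncestors q c.1 c.2 = t
    obtain ⟨u, hu, w, hw, hPw⟩ := h.exists_candidate hP (by omega)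
    obtain ⟨⟨u, v⟩, hc, hmax⟩ :=
      cand.exists_max_image (dfsKey q) ⟨(u, w), by simp [cand, hu, hw, hPw]⟩
    simp only [cand, Finset.mem_filter, Finset.mem_univ, true_and] at hc hmax
    exact ⟨_, _, h.succ hc.1 hc.2.1 hc.2.2 fun x hx w hw hPw => hmax (x, w) ⟨hx, hw, hPw⟩⟩

theorem exists_toParkingFunction_eq (hP0 : P 0 = 0)
    (hP : IsParkingFunction (⊤ : SimpleGraph (Fin (n+1))) 0 P) :
    ∃ T : RootedSpanningTree (⊤ : SimpleGraph (Fin (n+1))) 0, T.toParkingFunction = P := by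
  obtain ⟨visit, q, h⟩ := exists_isPartialPreimage hP le_rfl
  have h0 := h.parent_zero
  have hreach : ∀ v, ReachesRoot q 0 v := fun v => by
    obtain ⟨t, ht, rfl⟩ := h.exists_visit_eq v
    exact h.reachesRoot h0 ht
  have hadj : ∀ v, v ≠ 0 → (⊤ : SimpleGraph (Fin (n+1))).Adj (q v) v := fun v hv hqv =>
    hv (eq_root_of_parent_eq_self h0 (hreach v) hqv)
  let T : RootedSpanningTree (⊤ : SimpleGraph (Fin (n+1))) 0 := ⟨q, h0, hadj, hreach⟩
  refine ⟨T, funext fun v => ?_⟩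
  obtain ⟨t, ht, rfl⟩ := h.exists_visit_eq v
  have hvisit : T.dfsVisit t = visit t :=
    T.isDFSPrefix_dfsVisit.eq_of_isDFSPrefix h0 hreach h.toIsDFSPrefix ht
  rcases Nat.eq_zero_or_pos t with rfl | ht1
  · rw [h.visit_zero, hP0, T.toParkingFunction_zero]
  · have hT := T.toParkingFunction_add_inversionsAt (h.visit_ne_zero ht1 ht)
    rw [← hvisit, T.isDFSPrefix_dfsVisit.timeOf_visit ht, hvisit] at hT
    have hTq : inversionsAt T.parent (visit t) = inversionsAt q (visit t) := rfl
    have := h.add_inversionsAt t ht1 ht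
    omega

end Reconstruction

end PFG

theorem complete_trees_inversions_eq_parking_functions_general {n : ℕ}
    (a : ℕ) :
    Set.ncard {T : PFG.RootedSpanningTree (⊤ : SimpleGraph (Fin (n+1))) 0 |
        PFG.invNum T.parent = a} =
      Set.ncard {P : Fin (n+1) → ℕ |
        P 0 = 0 ∧ PFG.IsParkingFunction (⊤ : SimpleGraph (Fin (n+1))) 0 P ∧
        PFG.degPF 0 P + a = n.choose 2} := by
  have himage : {P : Fin (n+1) → ℕ | P 0 = 0 ∧ PFG.IsParkingFunction ⊤ 0 P ∧
      PFG.degPF 0 P + a = n.choose 2} = PFG.RootedSpanningTree.toParkingFunction ''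
        {T : PFG.RootedSpanningTree (⊤ : SimpleGraph (Fin (n+1))) 0 | PFG.invNum T.parent = a} := by
    ext P
    constructor
    · rintro ⟨hP0, hP, hdeg⟩
      obtain ⟨T, rfl⟩ := PFG.exists_toParkingFunction_eq hP0 hP
      have := T.degPF_toParkingFunction_add_invNum
      exact ⟨T, by simp only [Set.mem_ofPred_eq]; omega, rfl⟩
    · rintro ⟨T, rfl, rfl⟩
      exact ⟨T.toParkingFunction_zero, T.isParkingFunction_toParkingFunction,
        T.degPF_toParkingFunction_add_invNum⟩
  rw [himage, PFG.RootedSpanningTree.toParkingFunction_injective.injOn.ncard_image]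

/-- For the complete graph `K_{n+1}` rooted at `0`: for each `a`, the number
of spanning trees with exactly `a` inversions equals the number of parking
functions of degree `C(n,2) - a` (stated additively: `deg P + a = C(n,2)`). -/
theorem complete_trees_inversions_eq_parking_functions {n : ℕ} (hn : 1 ≤ n)
    (a : ℕ) :
    Set.ncard {T : PFG.RootedSpanningTree (⊤ : SimpleGraph (Fin (n+1))) 0 |
        PFG.invNum T.parent = a} =
      Set.ncard {P : Fin (n+1) → ℕ |
        P 0 = 0 ∧ PFG.IsParkingFunction (⊤ : SimpleGraph (Fin (n+1))) 0 P ∧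
        PFG.degPF 0 P + a = n.choose 2} :=
  complete_trees_inversions_eq_parking_functions_general a
end

section
/- Let G be a connected simple graph with root r, and let T be a spanning tree of G rooted at r. Running the 'tree to parking function' procedure (depth-first search of G guided by T, visiting neighbors in decreasing order, incrementing P(j) each time a non-tree edge (i,j) to an unvisited vertex j is encountered) produces a function P_T with deg P_T = (number of edges of G not in T) - (number of κ-inversions of T counted via the DFS order). In particular deg P_T ≤ g = |E| - |V| + 1. -/
open Finset

namespace PFG

/-- One step of the tree-to-parking-function procedure: depth-first search of
`G` guided by the tree with parent map `par`, scanning unvisited neighbors in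
decreasing order; tree edges `(i,j)` are followed recursively and each
non-tree edge `(i,j)` to an unvisited `j` increments `P j`.  The state is the
pair (visited vertices, current function `P`). -/
noncomputable def treeStep {n : ℕ} (G : SimpleGraph (Fin (n+1)))
    (par : Fin (n+1) → Fin (n+1)) :
    ℕ → Fin (n+1) → Finset (Fin (n+1)) × (Fin (n+1) → ℕ) →
      Finset (Fin (n+1)) × (Fin (n+1) → ℕ)
  | 0, _, st => st
  | (fuel+1), i, st =>
      (nbrs G i).foldl
        (fun st j =>
          if j ∈ st.1 then st
          else if par j = i then treeStep G par fuel j (insert j st.1, st.2)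
          else (st.1, Function.update st.2 j (st.2 j + 1))) st

/-- The function `P_T` produced by the tree-to-parking-function procedure. -/
noncomputable def treeToPF {n : ℕ} (G : SimpleGraph (Fin (n+1))) (r : Fin (n+1))
    (par : Fin (n+1) → Fin (n+1)) : Fin (n+1) → ℕ :=
  (treeStep G par (n+1) r ({r}, fun _ => 0)).2

end PFG

/-!
Give every vertex `v` the word `key v` of its path from the root, and give the moment at which
`a` scans its neighbour `j` the word `key a ++ [j]`. Ordering letters so that larger vertices
come first (neighbours are scanned in decreasing order) and comparing words lexicographically,
the guided search meets these events in increasing order: at any time `τ` the visited vertices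
are those with `key v < τ`, and `P j` counts the scans `key a ++ [j] < τ` that found `j` still
unvisited, i.e. with `key a ++ [j] < key j`.

Orient each edge `{a, j}` of `G` so that `key a < key j`. If `key a ++ [j] = key j` it is the
tree edge `a = parent j`; if `key a ++ [j] < key j` its scan increments `P j`; otherwise `key j`
lies strictly between `key a` and `key a ++ [j]`, so `j` lies below a child `c > j` of `a` and
`(c, j)` is a κ-inversion. Hence the non-tree edges are matched with the increments of `P` and
the κ-inversions.
-/

namespace List

variable {α : Type*} [LinearOrder α]

theorem head_le_of_le {a a' : α} {l l' : List α} (h : a' :: l' ≤ a :: l) : a' ≤ a := by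
  rcases h.lt_or_eq with h | h
  · exact head_le_of_lt h
  · exact (List.cons.inj h).1.le

theorem cons_le_cons_iff' {a : α} {l l' : List α} : a :: l ≤ a :: l' ↔ l ≤ l' := by
  simp only [← not_lt, cons_lt_cons_self]

theorem lt_append_singleton (u : List α) (b : α) : u < u ++ [b] := by
  simpa using append_left_lt (l₁ := u) (nil_lt_cons b [])

theorem append_singleton_lt_append_singleton (u : List α) {b b' : α} (h : b < b') :
    u ++ [b] < u ++ [b'] :=
  append_left_lt (Lex.rel h)

theorem lt_append_singleton_of_isPrefix {u w : List α} {b : α} (hu : u <+: w)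
    (hw : ∀ c ∈ w, c < b) : w < u ++ [b] := by
  obtain ⟨s, rfl⟩ := hu
  cases s with
  | nil => simpa using lt_append_singleton u b
  | cons c s => exact append_left_lt (Lex.rel (hw c (by simp)))

theorem append_singleton_le_of_lt {u w : List α} {b : α} (hb : ∀ c, b ≤ c) (h : u < w) :
    u ++ [b] ≤ w := by
  induction u generalizing w with
  | nil =>
    cases w with
    | nil => exact absurd h (not_lt_nil _)
    | cons c w =>
      rcases (hb c).lt_or_eq with hlt | rfl
      · exact le_of_lt (Lex.rel hlt)
      · exact cons_le_cons_iff'.mpr (not_lt.mp (not_lt_nil w))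
  | cons a u ih =>
    cases w with
    | nil => exact absurd h (not_lt_nil _)
    | cons c w =>
      rcases cons_lt_cons_iff.mp h with hlt | ⟨rfl, hlt⟩
      · exact le_of_lt (Lex.rel hlt)
      · exact cons_le_cons_iff'.mpr (ih hlt)

theorem lt_append_singleton_iff_le {u w : List α} {b : α} (hb : ∀ c, b ≤ c) :
    w < u ++ [b] ↔ w ≤ u :=
  ⟨fun h => not_lt.mp fun h' => (append_singleton_le_of_lt hb h').not_gt h,
    fun h => h.trans_lt (lt_append_singleton u b)⟩

theorem exists_isPrefix_of_le_of_lt {u w : List α} {b₁ b₂ : α} (h₁ : u ++ [b₁] ≤ w)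
    (h₂ : w < u ++ [b₂]) : ∃ b, b₁ ≤ b ∧ b < b₂ ∧ u ++ [b] <+: w := by
  induction u generalizing w with
  | nil =>
    cases w with
    | nil => exact absurd h₁ (by simp)
    | cons c w =>
      refine ⟨c, head_le_of_le h₁, ?_, by simp⟩
      rcases cons_lt_cons_iff.mp h₂ with h | ⟨-, h⟩
      · exact h
      · exact absurd h (not_lt_nil _)
  | cons a u ih =>
    cases w with
    | nil => exact absurd h₁ (by simp)
    | cons c w =>
      obtain rfl : c = a := le_antisymm (head_le_of_lt h₂) (head_le_of_le h₁)
      obtain ⟨b, hb₁, hb₂, hb⟩ :=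
        ih (cons_le_cons_iff'.mp h₁) (cons_lt_cons_self.mp h₂)
      exact ⟨b, hb₁, hb₂, (prefix_cons_inj c).mpr hb⟩

end List

namespace PFG

variable {V : Type*}

/-- `⊥` marks entering a vertex and `⊤` leaving it; in between, its neighbours are scanned,
larger ones first. -/
abbrev Slot (V : Type*) := WithBot (WithTop Vᵒᵈ)

def slot [LinearOrder V] (x : V) : Slot V :=
  ((OrderDual.toDual x : Vᵒᵈ) : WithTop Vᵒᵈ)

section Slot

variable [LinearOrder V] {x y : V}

@[simp] lemma slot_lt_slot : slot x < slot y ↔ y < x := by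
  simp [slot]

@[simp] lemma slot_inj : slot x = slot y ↔ x = y := by
  simp [slot]

@[simp] lemma slot_lt_top : slot x < ⊤ :=
  WithBot.coe_lt_coe.mpr (WithTop.coe_lt_top _)

end Slot

structure RootedTree (V : Type*) (r : V) where
  parent : V → V
  parent_root : parent r = r
  reaches_root : ∀ v, ∃ k, parent^[k] v = r

namespace RootedTree

variable {r : V} (t : RootedTree V r)

open Classical in
noncomputable def depth (v : V) : ℕ := Nat.find (t.reaches_root v)

/-- The path from the root (excluded) down to `v`. -/
noncomputable def key [LinearOrder V] (v : V) : List (Slot V) :=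
  ((List.range (t.depth v)).map fun k => slot (t.parent^[k] v)).reverse

noncomputable def scanTime [LinearOrder V] (a j : V) : List (Slot V) := t.key a ++ [slot j]

open Classical in
noncomputable def subtree [LinearOrder V] [Fintype V] (i : V) : Finset V :=
  {v | t.key i <+: t.key v}

variable {t}

lemma depth_root : t.depth r = 0 := by
  classical
  simp [depth]

lemma depth_of_ne_root {v : V} (hv : v ≠ r) : t.depth v = t.depth (t.parent v) + 1 := by
  classical
  exact Nat.find_comp_succ _ (t.reaches_root (t.parent v)) hv

variable [LinearOrder V]

@[simp] lemma key_root : t.key r = [] := by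
  simp [key, depth_root]

lemma key_of_ne_root {v : V} (hv : v ≠ r) : t.key v = t.key (t.parent v) ++ [slot v] := by
  simp [key, depth_of_ne_root hv, List.range_succ_eq_map, Function.iterate_succ_apply]

lemma key_eq_nil {v : V} : t.key v = [] ↔ v = r := by
  refine ⟨fun h => ?_, by rintro rfl; exact key_root⟩
  by_contra hv
  simp [key_of_ne_root hv] at h

lemma key_injective : Function.Injective t.key := by
  intro a c h
  by_cases hc : c = r
  · rw [hc, key_root, key_eq_nil] at h
    rw [h, hc]
  have ha : a ≠ r := by
    rintro rfl
    exact hc (key_eq_nil.mp (h.symm.trans key_root))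
  rw [key_of_ne_root ha, key_of_ne_root hc] at h
  exact slot_inj.mp (List.singleton_inj.mp (List.append_inj' h rfl).2)

lemma parent_eq_of_key_eq_append {a c : V} {b : Slot V} (h : t.key c = t.key a ++ [b]) :
    b = slot c ∧ t.parent c = a ∧ c ≠ r := by
  have hc : c ≠ r := fun hc => by simp [hc] at h
  rw [key_of_ne_root hc] at h
  obtain ⟨h₁, h₂⟩ := List.append_inj' h rfl
  exact ⟨(List.singleton_inj.mp h₂).symm, key_injective h₁, hc⟩

lemma key_parent_isPrefix (v : V) : t.key (t.parent v) <+: t.key v := by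
  by_cases hv : v = r
  · rw [hv, t.parent_root]
  · rw [key_of_ne_root hv]
    exact List.prefix_append _ _

lemma isPrefix_key_iff {u : List (Slot V)} {v : V} :
    u <+: t.key v ↔ ∃ a, t.key a = u ∧ ∃ k, t.parent^[k] v = a := by
  constructor
  · intro hu
    obtain ⟨k, hk⟩ := t.reaches_root v
    induction k generalizing v with
    | zero =>
      change v = r at hk
      subst hk
      rw [key_root, List.prefix_nil] at hu
      exact ⟨v, by rw [hu, key_root], 0, rfl⟩
    | succ k ih =>
      by_cases hv : v = r
      · subst hv
        exact ih hu (Function.iterate_fixed t.parent_root k)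
      rw [key_of_ne_root hv, List.prefix_concat_iff] at hu
      rcases hu with hu | hu
      · exact ⟨v, by rw [hu, key_of_ne_root hv], 0, rfl⟩
      · obtain ⟨a, ha, m, hm⟩ := ih hu hk
        exact ⟨a, ha, m + 1, hm⟩
  · rintro ⟨a, rfl, k, rfl⟩
    induction k generalizing v with
    | zero => exact List.prefix_refl _
    | succ k ih => exact (ih (v := t.parent v)).trans (key_parent_isPrefix v)

lemma key_of_parent_eq {i x : V} (hx : t.parent x = i) (hxi : x ≠ i) :
    t.key x = t.key i ++ [slot x] := by
  have hxr : x ≠ r := by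
    rintro rfl
    exact hxi (t.parent_root.symm.trans hx)
  rw [key_of_ne_root hxr, hx]

lemma parent_eq_of_isPrefix_key {i x v : V} (h : t.key i ++ [slot x] <+: t.key v) :
    t.parent x = i := by
  obtain ⟨c, hc, -⟩ := isPrefix_key_iff.mp h
  obtain ⟨hxc, hci, -⟩ := parent_eq_of_key_eq_append hc
  rwa [slot_inj.mp hxc]

lemma eq_or_parent_eq_of_isPrefix_scanTime {i x a j : V}
    (h : t.key i ++ [slot x] <+: t.scanTime a j) : (a = i ∧ j = x) ∨ t.parent x = i := by
  rcases List.prefix_concat_iff.mp h with h | h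
  · obtain ⟨hia, hxj⟩ := List.append_inj' h rfl
    exact Or.inl ⟨(key_injective hia).symm, (slot_inj.mp (List.singleton_inj.mp hxj)).symm⟩
  · exact Or.inr (parent_eq_of_isPrefix_key h)

lemma lt_top_of_mem_key {c : Slot V} {v : V} (hc : c ∈ t.key v) : c < ⊤ := by
  simp only [key, List.mem_reverse, List.mem_map] at hc
  obtain ⟨k, -, rfl⟩ := hc
  exact slot_lt_top

lemma subtree_ssubset [Fintype V] {i x : V} (hx : t.parent x = i) (hxi : x ≠ i) :
    t.subtree x ⊂ t.subtree i := by
  have hkx := key_of_parent_eq hx hxi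
  refine ssubset_iff_of_subset (fun v hv => ?_) |>.mpr ⟨i, ?_, ?_⟩
  · simp only [subtree, Finset.mem_filter, Finset.mem_univ, true_and] at hv ⊢
    exact (hkx ▸ List.prefix_append _ _).trans hv
  · simp [subtree]
  · simp only [subtree, Finset.mem_filter, Finset.mem_univ, true_and, hkx]
    intro h
    simpa using h.length_le

lemma lt_top_of_mem_scanTime {c : Slot V} {a j : V} (hc : c ∈ t.scanTime a j) : c < ⊤ := by
  rcases List.mem_append.mp hc with hc | hc
  · exact lt_top_of_mem_key hc
  · rw [List.mem_singleton.mp hc]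
    exact slot_lt_top

end RootedTree

section DFS

open Classical

variable {n : ℕ} {r : Fin (n+1)} (G : SimpleGraph (Fin (n+1))) (t : RootedTree (Fin (n+1)) r)

noncomputable def visitedAt (τ : List (Slot (Fin (n+1)))) : Finset (Fin (n+1)) :=
  {v | t.key v < τ}

noncomputable def countAt (τ : List (Slot (Fin (n+1)))) (j : Fin (n+1)) : ℕ :=
  #{a | G.Adj a j ∧ t.scanTime a j < τ ∧ t.scanTime a j < t.key j}

/-- The state of the guided search at time `τ`: the vertices entered before `τ` and, for each
`j`, the number of scans of `j` made before `τ` while `j` was still unvisited. -/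
noncomputable def stateAt (τ : List (Slot (Fin (n+1)))) :
    Finset (Fin (n+1)) × (Fin (n+1) → ℕ) :=
  (visitedAt t τ, countAt G t τ)

noncomputable def scanStep (par : Fin (n+1) → Fin (n+1)) (fuel : ℕ) (i : Fin (n+1))
    (st : Finset (Fin (n+1)) × (Fin (n+1) → ℕ)) (j : Fin (n+1)) :
    Finset (Fin (n+1)) × (Fin (n+1) → ℕ) :=
  if j ∈ st.1 then st
  else if par j = i then treeStep G par fuel j (insert j st.1, st.2)
  else (st.1, Function.update st.2 j (st.2 j + 1))

lemma treeStep_succ (par : Fin (n+1) → Fin (n+1)) (fuel : ℕ) (i : Fin (n+1))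
    (st : Finset (Fin (n+1)) × (Fin (n+1) → ℕ)) :
    treeStep G par (fuel + 1) i st = (nbrs G i).foldl (scanStep G par fuel i) st := by
  rw [treeStep]; rfl

variable {G t}

lemma mem_visitedAt {τ : List (Slot (Fin (n+1)))} {v : Fin (n+1)} :
    v ∈ visitedAt t τ ↔ t.key v < τ := by
  simp [visitedAt]

lemma visitedAt_eq {τ₁ τ₂ : List (Slot (Fin (n+1)))} (h : τ₁ ≤ τ₂)
    (hkey : ∀ v, τ₁ ≤ t.key v → t.key v < τ₂ → False) :
    visitedAt t τ₁ = visitedAt t τ₂ := by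
  ext v
  simp only [mem_visitedAt]
  exact ⟨fun hv => hv.trans_le h, fun hv => not_le.mp fun h₁ => hkey v h₁ hv⟩

lemma countAt_add {τ₁ τ₂ : List (Slot (Fin (n+1)))} (h : τ₁ ≤ τ₂) (j : Fin (n+1)) :
    countAt G t τ₂ j = countAt G t τ₁ j + #{a | G.Adj a j ∧ τ₁ ≤ t.scanTime a j ∧
      t.scanTime a j < τ₂ ∧ t.scanTime a j < t.key j} := by
  rw [countAt, countAt, ← card_union_of_disjoint]
  · congr 1
    ext a
    simp only [mem_filter, mem_univ, true_and, mem_union]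
    constructor
    · rintro ⟨hj, h₂, hk⟩
      by_cases h₁ : t.scanTime a j < τ₁
      · exact Or.inl ⟨hj, h₁, hk⟩
      · exact Or.inr ⟨hj, not_lt.mp h₁, h₂, hk⟩
    · rintro (⟨hj, h₁, hk⟩ | ⟨hj, -, h₂, hk⟩)
      · exact ⟨hj, h₁.trans_le h, hk⟩
      · exact ⟨hj, h₂, hk⟩
  · rw [disjoint_filter]
    rintro a - ⟨-, h₁, -⟩ ⟨-, h₁', -⟩
    exact (not_lt.mpr h₁') h₁

lemma stateAt_eq {τ₁ τ₂ : List (Slot (Fin (n+1)))} (h : τ₁ ≤ τ₂)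
    (hkey : ∀ v, τ₁ ≤ t.key v → t.key v < τ₂ → False)
    (hscan : ∀ a j, G.Adj a j → t.scanTime a j < t.key j → τ₁ ≤ t.scanTime a j →
      t.scanTime a j < τ₂ → False) :
    stateAt G t τ₁ = stateAt G t τ₂ := by
  refine Prod.ext (visitedAt_eq h hkey) (funext fun j => ?_)
  simp only [stateAt]
  rw [countAt_add h j, left_eq_add, card_eq_zero,
    filter_eq_empty_iff]
  rintro a - ⟨hj, h₁, h₂, hk⟩
  exact hscan a j hj hk h₁ h₂

lemma stateAt_key_append_bot (x : Fin (n+1)) :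
    stateAt G t (t.key x ++ [⊥]) = (insert x (visitedAt t (t.key x)), countAt G t (t.key x)) := by
  have hle : ∀ w : List (Slot (Fin (n+1))), w < t.key x ++ [⊥] ↔ w ≤ t.key x :=
    fun w => List.lt_append_singleton_iff_le fun _ => bot_le
  refine Prod.ext ?_ ?_
  · ext v
    simp only [stateAt, mem_visitedAt, mem_insert, hle, le_iff_lt_or_eq,
      t.key_injective.eq_iff]
    tauto
  · refine funext fun j => ?_
    simp only [stateAt]
    rw [countAt_add (List.lt_append_singleton _ _).le j, add_eq_left, card_eq_zero,
      filter_eq_empty_iff]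
    rintro a - ⟨-, h₁, h₂, hk⟩
    have heq : t.key x = t.scanTime a j := le_antisymm h₁ ((hle _).mp h₂)
    obtain ⟨hj, -⟩ := RootedTree.parent_eq_of_key_eq_append heq
    rw [slot_inj] at hj
    subst hj
    rw [← heq] at hk
    exact lt_irrefl _ hk

def nextSlot {V : Type*} [LinearOrder V] : List V → Slot V
  | [] => ⊤
  | x :: _ => slot x

lemma mem_nbrs {i j : Fin (n+1)} : j ∈ nbrs G i ↔ G.Adj i j := by
  simp [nbrs]

lemma adj_of_append_cons_eq_nbrs {i x : Fin (n+1)} {pre l : List (Fin (n+1))}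
    (hl : pre ++ x :: l = nbrs G i) : G.Adj i x :=
  mem_nbrs.mp (hl ▸ List.mem_append_right pre List.mem_cons_self)

lemma nbrs_pairwise (i : Fin (n+1)) : (nbrs G i).Pairwise (· > ·) := by
  rw [nbrs]
  exact List.pairwise_reverse.mpr
    (by simpa using List.sortedLT_iff_pairwise.mp (sortedLT_sort _))

lemma slot_lt_nextSlot {i x : Fin (n+1)} {pre l : List (Fin (n+1))}
    (hl : pre ++ x :: l = nbrs G i) : slot x < nextSlot l := by
  have hp := nbrs_pairwise (G := G) i
  rw [← hl, List.pairwise_append, List.pairwise_cons] at hp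
  cases l with
  | nil => exact slot_lt_top
  | cons z l => exact slot_lt_slot.mpr (hp.2.1.1 z (by simp))

lemma mem_of_slot_lt_nextSlot {i y : Fin (n+1)} {pre l : List (Fin (n+1))}
    (hl : pre ++ l = nbrs G i) (hy : G.Adj i y) (h : slot y < nextSlot l) : y ∈ pre := by
  have hp := nbrs_pairwise (G := G) i
  rw [← hl, List.pairwise_append] at hp
  have hy' : y ∈ pre ++ l := hl ▸ mem_nbrs.mpr hy
  rcases List.mem_append.mp hy' with hy' | hy'
  · exact hy'
  · cases l with
    | nil => simp at hy'
    | cons z l =>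
      rw [nextSlot, slot_lt_slot] at h
      rcases List.mem_cons.mp hy' with rfl | hy'
      · exact absurd h (lt_irrefl _)
      · exact absurd h ((List.pairwise_cons.mp hp.2.1).1 y hy').asymm

lemma exists_adj_of_isPrefix_key (hadj : ∀ v, v ≠ r → G.Adj (t.parent v) v)
    {i v : Fin (n+1)} {b : Slot (Fin (n+1))} (h : t.key i ++ [b] <+: t.key v) :
    ∃ y, b = slot y ∧ G.Adj i y := by
  obtain ⟨c, hc, -⟩ := RootedTree.isPrefix_key_iff.mp h
  obtain ⟨rfl, rfl, hcr⟩ := RootedTree.parent_eq_of_key_eq_append hc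
  exact ⟨c, rfl, hadj c hcr⟩

lemma exists_adj_of_isPrefix_scanTime (hadj : ∀ v, v ≠ r → G.Adj (t.parent v) v)
    {i a j : Fin (n+1)} {b : Slot (Fin (n+1))} (hj : G.Adj a j)
    (h : t.key i ++ [b] <+: t.scanTime a j) : ∃ y, b = slot y ∧ G.Adj i y := by
  rcases List.prefix_concat_iff.mp h with h | h
  · obtain ⟨hia, hb⟩ := List.append_inj' h rfl
    rw [t.key_injective hia]
    exact ⟨j, List.singleton_inj.mp hb, hj⟩
  · exact exists_adj_of_isPrefix_key hadj h

lemma isPrefix_of_le_of_lt_nextSlot {i x : Fin (n+1)} {pre l : List (Fin (n+1))}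
    {w : List (Slot (Fin (n+1)))} (hl : pre ++ x :: l = nbrs G i)
    (hw : ∀ b, t.key i ++ [b] <+: w → ∃ y, b = slot y ∧ G.Adj i y)
    (h₁ : t.key i ++ [slot x] ≤ w) (h₂ : w < t.key i ++ [nextSlot l]) :
    t.key i ++ [slot x] <+: w := by
  obtain ⟨b, hb₁, hb₂, hb⟩ := List.exists_isPrefix_of_le_of_lt h₁ h₂
  obtain ⟨y, rfl, hy⟩ := hw b hb
  suffices y = x by rwa [this] at hb
  have hy' := mem_of_slot_lt_nextSlot (pre := pre ++ [x]) (by simpa using hl) hy hb₂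
  rcases List.mem_append.mp hy' with hy' | hy'
  · have hp := nbrs_pairwise (G := G) i
    rw [← hl, List.pairwise_append] at hp
    exact absurd hb₁ (not_le.mpr (slot_lt_slot.mpr (hp.2.2 y hy' x List.mem_cons_self)))
  · exact List.mem_singleton.mp hy'

lemma stateAt_append_bot_eq_nextSlot (hadj : ∀ v, v ≠ r → G.Adj (t.parent v) v)
    (i : Fin (n+1)) :
    stateAt G t (t.key i ++ [⊥]) = stateAt G t (t.key i ++ [nextSlot (nbrs G i)]) := by
  have hw : ∀ w : List (Slot (Fin (n+1))),
      (∀ b, t.key i ++ [b] <+: w → ∃ y, b = slot y ∧ G.Adj i y) →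
      t.key i ++ [⊥] ≤ w → w < t.key i ++ [nextSlot (nbrs G i)] → False := by
    intro w hw h₁ h₂
    obtain ⟨b, -, hb₂, hb⟩ := List.exists_isPrefix_of_le_of_lt h₁ h₂
    obtain ⟨y, rfl, hy⟩ := hw b hb
    simpa using mem_of_slot_lt_nextSlot (pre := []) (by simp) hy hb₂
  refine stateAt_eq ?_ (fun v => hw _ fun b hb => exists_adj_of_isPrefix_key hadj hb)
    (fun a j hj _ => hw _ fun b hb => exists_adj_of_isPrefix_scanTime hadj hj hb)
  rcases (bot_le (a := nextSlot (nbrs G i))).lt_or_eq with h | h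
  · exact (List.append_singleton_lt_append_singleton _ h).le
  · rw [h]

lemma isPrefix_key_of_mem_scan (hadj : ∀ v, v ≠ r → G.Adj (t.parent v) v)
    {i x v : Fin (n+1)} {pre l : List (Fin (n+1))} (hl : pre ++ x :: l = nbrs G i)
    (h₁ : t.key i ++ [slot x] ≤ t.key v) (h₂ : t.key v < t.key i ++ [nextSlot l]) :
    t.key i ++ [slot x] <+: t.key v :=
  isPrefix_of_le_of_lt_nextSlot hl (fun _ hb => exists_adj_of_isPrefix_key hadj hb) h₁ h₂

lemma isPrefix_scanTime_of_mem_scan (hadj : ∀ v, v ≠ r → G.Adj (t.parent v) v)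
    {i x a j : Fin (n+1)} {pre l : List (Fin (n+1))} (hl : pre ++ x :: l = nbrs G i)
    (hj : G.Adj a j) (h₁ : t.key i ++ [slot x] ≤ t.scanTime a j)
    (h₂ : t.scanTime a j < t.key i ++ [nextSlot l]) : t.key i ++ [slot x] <+: t.scanTime a j :=
  isPrefix_of_le_of_lt_nextSlot hl (fun _ hb => exists_adj_of_isPrefix_scanTime hadj hj hb)
    h₁ h₂

lemma scanStep_of_parent_eq (hadj : ∀ v, v ≠ r → G.Adj (t.parent v) v) {fuel : ℕ}
    {i x : Fin (n+1)} {pre l : List (Fin (n+1))} (hl : pre ++ x :: l = nbrs G i)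
    (hchild : t.parent x = i)
    (hrec : treeStep G t.parent fuel x (stateAt G t (t.key x ++ [⊥])) =
      stateAt G t (t.key x ++ [⊤])) :
    scanStep G t.parent fuel i (stateAt G t (t.key i ++ [slot x])) x =
      stateAt G t (t.key i ++ [nextSlot l]) := by
  have hix : G.Adj i x := adj_of_append_cons_eq_nbrs hl
  have hkx : t.key x = t.key i ++ [slot x] := RootedTree.key_of_parent_eq hchild hix.ne'
  have hvis : x ∉ visitedAt t (t.key i ++ [slot x]) := by simp [mem_visitedAt, hkx]
  rw [scanStep, stateAt, if_neg hvis, if_pos hchild, ← hkx, ← stateAt_key_append_bot, hrec]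
  have hexit : t.key x ++ [⊤] ≤ t.key i ++ [nextSlot l] := by
    rw [hkx, List.append_assoc]
    exact (List.append_left_lt (List.Lex.rel (slot_lt_nextSlot hl))).le
  have hle : t.key i ++ [slot x] ≤ t.key x ++ [⊤] := hkx ▸ (List.lt_append_singleton _ _).le
  -- a word in between would extend `key x`, hence precede `key x ++ [⊤]`
  refine stateAt_eq hexit (fun v h₁ h₂ => ?_) (fun a j hj _ h₁ h₂ => ?_)
  · have hv := isPrefix_key_of_mem_scan hadj hl (hle.trans h₁) h₂
    rw [← hkx] at hv
    exact not_lt.mpr h₁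
      (List.lt_append_singleton_of_isPrefix hv fun _ => RootedTree.lt_top_of_mem_key)
  · have hv := isPrefix_scanTime_of_mem_scan hadj hl hj (hle.trans h₁) h₂
    rw [← hkx] at hv
    exact not_lt.mpr h₁
      (List.lt_append_singleton_of_isPrefix hv fun _ => RootedTree.lt_top_of_mem_scanTime)

lemma eq_of_mem_scan_of_parent_ne (hadj : ∀ v, v ≠ r → G.Adj (t.parent v) v)
    {i x a j : Fin (n+1)} {pre l : List (Fin (n+1))} (hl : pre ++ x :: l = nbrs G i)
    (hchild : t.parent x ≠ i) (hj : G.Adj a j) (h₁ : t.key i ++ [slot x] ≤ t.scanTime a j)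
    (h₂ : t.scanTime a j < t.key i ++ [nextSlot l]) : a = i ∧ j = x :=
  (RootedTree.eq_or_parent_eq_of_isPrefix_scanTime
    (isPrefix_scanTime_of_mem_scan hadj hl hj h₁ h₂)).resolve_right hchild

lemma scanStep_of_visited (hadj : ∀ v, v ≠ r → G.Adj (t.parent v) v) {fuel : ℕ}
    {i x : Fin (n+1)} {pre l : List (Fin (n+1))} (hl : pre ++ x :: l = nbrs G i)
    (hvis : t.key x < t.key i ++ [slot x]) :
    scanStep G t.parent fuel i (stateAt G t (t.key i ++ [slot x])) x =
      stateAt G t (t.key i ++ [nextSlot l]) := by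
  have hix : G.Adj i x := adj_of_append_cons_eq_nbrs hl
  have hchild : t.parent x ≠ i := fun h =>
    lt_irrefl _ (RootedTree.key_of_parent_eq h hix.ne' ▸ hvis)
  rw [scanStep, stateAt, if_pos (mem_visitedAt.mpr hvis), ← stateAt]
  refine stateAt_eq (List.append_singleton_lt_append_singleton _ (slot_lt_nextSlot hl)).le
    (fun v h₁ h₂ => hchild (RootedTree.parent_eq_of_isPrefix_key
      (isPrefix_key_of_mem_scan hadj hl h₁ h₂))) (fun a j hj hk h₁ h₂ => ?_)
  obtain ⟨rfl, rfl⟩ := eq_of_mem_scan_of_parent_ne hadj hl hchild hj h₁ h₂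
  exact lt_asymm hk hvis

lemma scanStep_of_not_visited (hadj : ∀ v, v ≠ r → G.Adj (t.parent v) v) {fuel : ℕ}
    {i x : Fin (n+1)} {pre l : List (Fin (n+1))} (hl : pre ++ x :: l = nbrs G i)
    (hchild : t.parent x ≠ i) (hvis : ¬ t.key x < t.key i ++ [slot x]) :
    scanStep G t.parent fuel i (stateAt G t (t.key i ++ [slot x])) x =
      stateAt G t (t.key i ++ [nextSlot l]) := by
  have hix : G.Adj i x := adj_of_append_cons_eq_nbrs hl
  have hlt : t.key i ++ [slot x] < t.key i ++ [nextSlot l] :=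
    List.append_singleton_lt_append_singleton _ (slot_lt_nextSlot hl)
  have hxlt : t.scanTime i x < t.key x :=
    lt_of_le_of_ne (not_lt.mp hvis) fun h =>
      hchild (RootedTree.parent_eq_of_key_eq_append h.symm).2.1
  rw [scanStep, stateAt, if_neg (mt mem_visitedAt.mp hvis), if_neg hchild]
  refine Prod.ext (visitedAt_eq hlt.le fun v h₁ h₂ => hchild
    (RootedTree.parent_eq_of_isPrefix_key (isPrefix_key_of_mem_scan hadj hl h₁ h₂)))
    (funext fun j => ?_)
  simp only [stateAt]
  rw [countAt_add hlt.le j, Function.update_apply]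
  by_cases hjx : j = x
  · subst hjx
    rw [if_pos rfl, add_right_inj, eq_comm, card_eq_one]
    refine ⟨i, eq_singleton_iff_unique_mem.mpr ⟨?_, fun a ha => ?_⟩⟩
    · simpa [mem_filter] using ⟨hix, le_rfl, hlt, hxlt⟩
    · simp only [mem_filter, mem_univ, true_and] at ha
      exact (eq_of_mem_scan_of_parent_ne hadj hl hchild ha.1 ha.2.1 ha.2.2.1).1
  · rw [if_neg hjx, left_eq_add, card_eq_zero, filter_eq_empty_iff]
    rintro a - ⟨hj, h₁, h₂, -⟩
    exact hjx (eq_of_mem_scan_of_parent_ne hadj hl hchild hj h₁ h₂).2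

lemma scanStep_stateAt (hadj : ∀ v, v ≠ r → G.Adj (t.parent v) v) {fuel : ℕ}
    {i x : Fin (n+1)} {pre l : List (Fin (n+1))} (hl : pre ++ x :: l = nbrs G i)
    (hrec : t.parent x = i → treeStep G t.parent fuel x (stateAt G t (t.key x ++ [⊥])) =
      stateAt G t (t.key x ++ [⊤])) :
    scanStep G t.parent fuel i (stateAt G t (t.key i ++ [slot x])) x =
      stateAt G t (t.key i ++ [nextSlot l]) := by
  by_cases hchild : t.parent x = i
  · exact scanStep_of_parent_eq hadj hl hchild (hrec hchild)
  by_cases hvis : t.key x < t.key i ++ [slot x]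
  · exact scanStep_of_visited hadj hl hvis
  · exact scanStep_of_not_visited hadj hl hchild hvis

lemma foldl_scanStep_stateAt (hadj : ∀ v, v ≠ r → G.Adj (t.parent v) v) {fuel : ℕ}
    {i : Fin (n+1)}
    (hrec : ∀ x, t.parent x = i → x ≠ i →
      treeStep G t.parent fuel x (stateAt G t (t.key x ++ [⊥])) = stateAt G t (t.key x ++ [⊤]))
    (pre l : List (Fin (n+1))) (hl : pre ++ l = nbrs G i) :
    l.foldl (scanStep G t.parent fuel i) (stateAt G t (t.key i ++ [nextSlot l])) =
      stateAt G t (t.key i ++ [⊤]) := by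
  induction l generalizing pre with
  | nil => rfl
  | cons x l ih =>
    have hxi : x ≠ i := (adj_of_append_cons_eq_nbrs hl).ne'
    rw [List.foldl_cons, nextSlot, scanStep_stateAt hadj hl (hrec x · hxi)]
    exact ih (pre ++ [x]) (by simpa using hl)

theorem treeStep_stateAt (hadj : ∀ v, v ≠ r → G.Adj (t.parent v) v) (fuel : ℕ)
    (i : Fin (n+1)) (hfuel : #(t.subtree i) ≤ fuel) :
    treeStep G t.parent fuel i (stateAt G t (t.key i ++ [⊥])) =
      stateAt G t (t.key i ++ [⊤]) := by
  induction fuel generalizing i with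
  | zero =>
    have hi : i ∈ t.subtree i := by simp [RootedTree.subtree]
    exact absurd hfuel (not_le.mpr (card_pos.mpr ⟨i, hi⟩))
  | succ fuel ih =>
    rw [treeStep_succ, stateAt_append_bot_eq_nextSlot hadj i]
    refine foldl_scanStep_stateAt hadj (fun x hx hxi => ih x ?_) [] (nbrs G i) rfl
    exact Nat.le_of_lt_succ ((card_lt_card (RootedTree.subtree_ssubset hx hxi)).trans_le hfuel)

end DFS

section Counting

open Classical

variable {n : ℕ} {r : Fin (n+1)} {G : SimpleGraph (Fin (n+1))} {t : RootedTree (Fin (n+1)) r}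

lemma ncard_setOf_prod {V : Type*} [Fintype V] (P : V → V → Prop) :
    {p : V × V | P p.1 p.2}.ncard = ∑ j, #{a | P a j} := by
  rw [Set.ncard_eq_toFinset_card', Set.toFinset_ofPred]
  simp only [card_filter]
  rw [Fintype.sum_prod_type_right]

lemma treeToPF_eq (hadj : ∀ v, v ≠ r → G.Adj (t.parent v) v) :
    treeToPF G r t.parent = fun j => #{a | G.Adj a j ∧ t.scanTime a j < t.key j} := by
  have hinit : (({r}, fun _ => 0) : Finset (Fin (n+1)) × (Fin (n+1) → ℕ)) =
      stateAt G t (t.key r ++ [⊥]) := by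
    rw [stateAt_key_append_bot, RootedTree.key_root]
    refine Prod.ext ?_ (funext fun j => ?_)
    · ext v
      simp [mem_visitedAt]
    · simp [countAt]
  have hfuel : #(t.subtree r) ≤ n + 1 := (card_le_univ _).trans (by simp)
  rw [treeToPF, hinit, treeStep_stateAt hadj (n + 1) r hfuel, RootedTree.key_root]
  funext j
  simp only [stateAt, countAt]
  congr 1
  ext a
  have hlt : t.scanTime a j < [⊤] :=
    List.lt_append_singleton_of_isPrefix List.nil_prefix fun _ =>
      RootedTree.lt_top_of_mem_scanTime
  simp [hlt]

lemma degPF_treeToPF (hadj : ∀ v, v ≠ r → G.Adj (t.parent v) v) :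
    degPF r (treeToPF G r t.parent) =
      {p : Fin (n+1) × Fin (n+1) | G.Adj p.1 p.2 ∧ t.scanTime p.1 p.2 < t.key p.2}.ncard := by
  rw [ncard_setOf_prod fun a j => G.Adj a j ∧ t.scanTime a j < t.key j, degPF,
    treeToPF_eq hadj]
  have hr : #{a | G.Adj a r ∧ t.scanTime a r < t.key r} = 0 := by simp
  convert sum_erase (f := fun j => #{a | G.Adj a j ∧ t.scanTime a j < t.key j}) univ hr

lemma mk_mem_treeEdges_iff {x y : Fin (n+1)} (hxy : t.key x < t.key y) :
    s(x, y) ∈ treeEdges r t.parent ↔ t.scanTime x y = t.key y := by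
  constructor
  · rintro ⟨v, hv, h⟩
    rcases Sym2.eq_iff.mp h with ⟨rfl, rfl⟩ | ⟨rfl, rfl⟩
    · exact (RootedTree.key_of_ne_root hv).symm
    · rw [RootedTree.key_of_ne_root hv] at hxy
      exact absurd hxy (List.lt_append_singleton _ _).not_gt
  · intro h
    obtain ⟨-, hyx, hyr⟩ := RootedTree.parent_eq_of_key_eq_append h.symm
    exact ⟨y, hyr, by rw [hyx]⟩

lemma injOn_mk_of_key_lt :
    Set.InjOn (fun p : Fin (n+1) × Fin (n+1) => s(p.1, p.2)) {p | t.key p.1 < t.key p.2} := by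
  rintro ⟨a, j⟩ h ⟨a', j'⟩ h' he
  rcases Sym2.eq_iff.mp he with ⟨rfl, rfl⟩ | ⟨rfl, rfl⟩
  · rfl
  · exact absurd (show t.key a < t.key j from h) (lt_asymm (show t.key j < t.key a from h'))

lemma nontreeEdges_eq_image :
    {e | e ∈ G.edgeSet ∧ e ∉ treeEdges r t.parent} =
      (fun p => s(p.1, p.2)) '' {p : Fin (n+1) × Fin (n+1) | G.Adj p.1 p.2 ∧
        t.key p.1 < t.key p.2 ∧ t.scanTime p.1 p.2 ≠ t.key p.2} := by
  ext e
  induction e using Sym2.ind with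
  | _ x y =>
  simp only [Set.mem_ofPred_eq, Set.mem_image, Prod.exists]
  constructor
  · rintro ⟨hxy, hT⟩
    rw [SimpleGraph.mem_edgeSet] at hxy
    rcases lt_or_gt_of_ne (t.key_injective.ne hxy.ne) with h | h
    · exact ⟨x, y, ⟨hxy, h, fun h' => hT ((mk_mem_treeEdges_iff h).mpr h')⟩, rfl⟩
    · rw [Sym2.eq_swap] at hT
      exact ⟨y, x, ⟨hxy.symm, h, fun h' => hT ((mk_mem_treeEdges_iff h).mpr h')⟩,
        Sym2.eq_swap⟩
  · rintro ⟨a, j, ⟨haj, h, hT⟩, he⟩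
    rw [← he]
    exact ⟨(SimpleGraph.mem_edgeSet G).mpr haj, fun h' => hT ((mk_mem_treeEdges_iff h).mp h')⟩

lemma nontreePairs_eq_union :
    {p : Fin (n+1) × Fin (n+1) | G.Adj p.1 p.2 ∧ t.key p.1 < t.key p.2 ∧
      t.scanTime p.1 p.2 ≠ t.key p.2} =
    {p : Fin (n+1) × Fin (n+1) | G.Adj p.1 p.2 ∧ t.scanTime p.1 p.2 < t.key p.2} ∪
      {p : Fin (n+1) × Fin (n+1) | G.Adj p.1 p.2 ∧ t.key p.1 < t.key p.2 ∧
        t.key p.2 < t.scanTime p.1 p.2} := by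
  ext ⟨a, j⟩
  simp only [Set.mem_ofPred_eq, Set.mem_union]
  constructor
  · rintro ⟨haj, h, hne⟩
    exact (lt_or_gt_of_ne hne).imp (⟨haj, ·⟩) (⟨haj, h, ·⟩)
  · rintro (⟨haj, h⟩ | ⟨haj, h, h'⟩)
    · exact ⟨haj, (List.lt_append_singleton _ _).trans h, h.ne⟩
    · exact ⟨haj, h, h'.ne'⟩

lemma inversionPairs_eq_image :
    {p : Fin (n+1) × Fin (n+1) | G.Adj p.1 p.2 ∧ t.key p.1 < t.key p.2 ∧
      t.key p.2 < t.scanTime p.1 p.2} =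
    (fun p : Fin (n+1) × Fin (n+1) => (t.parent p.1, p.2)) ''
      {p | IsKappaInversion G r t.parent p.1 p.2} := by
  ext ⟨a, j⟩
  simp only [Set.mem_ofPred_eq, Set.mem_image, Prod.exists, Prod.mk.injEq]
  constructor
  · rintro ⟨haj, h₁, h₂⟩
    obtain ⟨b, -, hb, hpre⟩ := List.exists_isPrefix_of_le_of_lt
      (List.append_singleton_le_of_lt (fun _ => bot_le) h₁) h₂
    obtain ⟨c, hc, k, hk⟩ := RootedTree.isPrefix_key_iff.mp hpre
    obtain ⟨rfl, rfl, hcr⟩ := RootedTree.parent_eq_of_key_eq_append hc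
    have hjc : j < c := slot_lt_slot.mp hb
    have hkpos : 0 < k := Nat.pos_of_ne_zero fun hk0 => by
      subst hk0
      exact hjc.ne hk
    exact ⟨c, j, ⟨⟨k, hkpos, hk⟩, hjc, hcr, haj⟩, rfl, rfl⟩
  · rintro ⟨c, j, ⟨⟨k, -, hk⟩, hjc, hcr, haj⟩, rfl, rfl⟩
    obtain ⟨s, hs⟩ := RootedTree.isPrefix_key_iff.mpr ⟨c, rfl, k, hk⟩
    rw [RootedTree.key_of_ne_root hcr, List.append_assoc, List.singleton_append] at hs
    rw [RootedTree.scanTime, ← hs]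
    refine ⟨haj, ?_, List.append_left_lt (List.Lex.rel (slot_lt_slot.mpr hjc))⟩
    simpa using List.append_left_lt (l₁ := t.key (t.parent c)) (List.nil_lt_cons (slot c) s)

lemma injOn_parent_kappa :
    Set.InjOn (fun p : Fin (n+1) × Fin (n+1) => (t.parent p.1, p.2))
      {p | IsKappaInversion G r t.parent p.1 p.2} := by
  rintro ⟨c, j⟩ ⟨⟨k, -, hk⟩, -, hc, -⟩ ⟨c', j'⟩ ⟨⟨k', -, hk'⟩, -, hc', -⟩ he
  obtain ⟨hpar, rfl⟩ := Prod.mk.inj he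
  have hpre := RootedTree.isPrefix_key_iff.mpr ⟨c, rfl, k, hk⟩
  have hpre' := RootedTree.isPrefix_key_iff.mpr ⟨c', rfl, k', hk'⟩
  have hlen : (t.key c).length = (t.key c').length := by
    rw [RootedTree.key_of_ne_root hc, RootedTree.key_of_ne_root hc', hpar]
    simp
  rw [t.key_injective ((List.prefix_of_prefix_length_le hpre hpre' hlen.le).eq_of_length hlen)]

lemma ncard_nontreeEdges :
    {e | e ∈ G.edgeSet ∧ e ∉ treeEdges r t.parent}.ncard =
      {p : Fin (n+1) × Fin (n+1) | G.Adj p.1 p.2 ∧ t.scanTime p.1 p.2 < t.key p.2}.ncard +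
        kappaNum G r t.parent := by
  rw [nontreeEdges_eq_image, (injOn_mk_of_key_lt.mono fun _ hp => hp.2.1).ncard_image,
    nontreePairs_eq_union, Set.ncard_union_eq, inversionPairs_eq_image,
    injOn_parent_kappa.ncard_image, kappaNum]
  rw [Set.disjoint_left]
  rintro p ⟨-, h⟩ ⟨-, -, h'⟩
  exact lt_asymm h h'

lemma ncard_treeEdges : (treeEdges r t.parent).ncard = n := by
  have himage : treeEdges r t.parent = (fun v => s(t.parent v, v)) '' {v | v ≠ r} := by
    ext e
    simp [treeEdges, eq_comm]
  have hinj : Set.InjOn (fun v => s(t.parent v, v)) {v | v ≠ r} := by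
    intro u hu v hv he
    rcases Sym2.eq_iff.mp he with ⟨-, h⟩ | ⟨hu', hv'⟩
    · exact h
    · have h₁ := congrArg List.length (RootedTree.key_of_ne_root (t := t) hu)
      have h₂ := congrArg List.length (RootedTree.key_of_ne_root (t := t) hv)
      rw [hu'] at h₁
      rw [← hv'] at h₂
      simp only [List.length_append, List.length_singleton] at h₁ h₂
      omega
  rw [himage, hinj.ncard_image, Set.ncard_eq_toFinset_card']
  simp [filter_ne', card_erase_of_mem]

lemma ncard_edgeSet (hadj : ∀ v, v ≠ r → G.Adj (t.parent v) v) :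
    G.edgeSet.ncard = {e | e ∈ G.edgeSet ∧ e ∉ treeEdges r t.parent}.ncard + n := by
  have hsub : treeEdges r t.parent ⊆ G.edgeSet := by
    rintro _ ⟨v, hv, rfl⟩
    exact hadj v hv
  have h := Set.ncard_sdiff_add_ncard_of_subset hsub
  rw [ncard_treeEdges] at h
  exact h.symm

end Counting
end PFG

theorem treeToPF_degree_general {n : ℕ} (G : SimpleGraph (Fin (n+1)))
    (r : Fin (n+1)) (T : PFG.RootedSpanningTree G r) :
    PFG.degPF r (PFG.treeToPF G r T.parent) + PFG.kappaNum G r T.parent =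
        Set.ncard {e : Sym2 (Fin (n+1)) | e ∈ G.edgeSet ∧
          e ∉ PFG.treeEdges r T.parent} ∧
      PFG.degPF r (PFG.treeToPF G r T.parent) + (n + 1) ≤ G.edgeSet.ncard + 1 := by
  let t : PFG.RootedTree (Fin (n+1)) r := ⟨T.parent, T.parent_root, T.reaches_root⟩
  have hdeg := PFG.degPF_treeToPF (t := t) T.adj_parent
  have hnontree := PFG.ncard_nontreeEdges (G := G) (t := t)
  have hedges := PFG.ncard_edgeSet (t := t) T.adj_parent
  dsimp only [t] at hdeg hnontree hedges
  exact ⟨by rw [hdeg, hnontree], by omega⟩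

/-- The tree-to-parking-function procedure applied to a spanning tree `T` of a
connected graph `G` produces `P_T` with
`deg P_T = #(edges of G not in T) - κ(G,T)` (stated additively); in
particular `deg P_T ≤ g = |E| - |V| + 1`. -/
theorem treeToPF_degree {n : ℕ} (G : SimpleGraph (Fin (n+1)))
    (hG : G.Connected) (r : Fin (n+1)) (T : PFG.RootedSpanningTree G r) :
    PFG.degPF r (PFG.treeToPF G r T.parent) + PFG.kappaNum G r T.parent =
        Set.ncard {e : Sym2 (Fin (n+1)) | e ∈ G.edgeSet ∧
          e ∉ PFG.treeEdges r T.parent} ∧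
      PFG.degPF r (PFG.treeToPF G r T.parent) + (n + 1) ≤ G.edgeSet.ncard + 1 :=
  treeToPF_degree_general G r T
end
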